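/- arXiv:1408.6151 — 8 statements merged into one kernel-verified Lean document; each statement's English description precedes it below -/
import Mathlib

section
/- For any irrational real number ξ and any integers a ≥ 1, b ≥ 1, 0 ≤ r ≤ a−1, 0 ≤ s ≤ b−1 with (r,s) ≠ (0,0), there exist infinitely many pairs of integers (m,n) such that |ξ − (am+r)/(bn+s)| ≤ ab/(4(bn+s)²). -/
/-!
Writing `Q = b n + s`, `P = a m + r`, `θ = b ξ / a`, `γ = (r - s ξ) / a` and `c = s / b`, one has
`Q ξ - P = a (n θ - m - γ)` and `Q = b (n + c)`, so it suffices to make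
`|(n + c)(n θ - m - γ)| ≤ 1/4` with `|n θ - m - γ|` arbitrarily small (a shifted form of
Minkowski's inhomogeneous theorem). Take a reduced fraction `p / q` with `δ = q θ - p` tiny and
`q |δ| ≤ 1`. For pairs with `n p - m q = C` the quantity `X = q (n θ - m - γ)` runs through an
arithmetic progression of step `q δ`, and `(n + c)(n θ - m - γ) = X (X + ε) / (q δ)` with
`|ε| ≤ 1/2` for a suitable `C`; of the two terms of the progression on either side of `0`, one makes
`|X (X + ε)| ≤ q |δ| / 4`. Since `ξ` is irrational, `|Q ξ - P|` never vanishes, so solutions with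
`|Q ξ - P|` arbitrarily small are infinitely many; `(r, s) ≠ (0, 0)` excludes `Q = 0`.
-/

lemma mul_abs_sub_le_or_mul_abs_add_le {ε u v : ℝ} (hε : |ε| ≤ 1 / 2) (hu : 0 ≤ u) (hv : 0 ≤ v)
    (huv : u + v ≤ 1) : u * |u - ε| ≤ (u + v) / 4 ∨ v * |v + ε| ≤ (u + v) / 4 := by
  wlog hε0 : 0 ≤ ε generalizing ε u v
  · have := this (ε := -ε) (by rwa [abs_neg]) hv hu (by linarith) (by linarith)
    rw [add_comm v u, ← sub_eq_add_neg, sub_neg_eq_add] at this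
    exact this.symm
  rw [abs_le] at hε
  rw [abs_of_nonneg (by linarith : 0 ≤ v + ε)]
  by_contra! h
  obtain ⟨hu4, hv4⟩ := h
  rcases le_or_gt u ε with hue | hue
  · rw [abs_of_nonpos (by linarith : u - ε ≤ 0)] at hu4
    nlinarith [mul_nonneg hu (by linarith : (0:ℝ) ≤ 1 / 2 - ε), sq_nonneg u]
  · rw [abs_of_pos (by linarith : 0 < u - ε)] at hu4
    -- `2u - ε` and `2v + ε` both exceed `√(ε² + u + v)`, yet by AM-GM their product is `≤ (u + v)²`
    have hU : ε ^ 2 + (u + v) < (2 * u - ε) ^ 2 := by nlinarith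
    have hV : ε ^ 2 + (u + v) < (2 * v + ε) ^ 2 := by nlinarith
    have hUV : ε ^ 2 + (u + v) < (2 * u - ε) * (2 * v + ε) := by
      nlinarith [mul_lt_mul'' hU hV (by positivity) (by positivity)]
    nlinarith [sq_nonneg (2 * u - ε - (2 * v + ε))]

lemma exists_int_abs_add_mul_le {ε σ : ℝ} (hε : |ε| ≤ 1 / 2) (hσ0 : σ ≠ 0) (hσ1 : |σ| ≤ 1)
    (x : ℝ) : ∃ k : ℤ, |x + k * σ| ≤ |σ| ∧ |(x + k * σ) * (x + k * σ + ε)| ≤ |σ| / 4 := by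
  wlog hσ : 0 < σ generalizing σ
  · obtain ⟨k, hk⟩ := this (σ := -σ) (neg_ne_zero.mpr hσ0) (by rwa [abs_neg])
      (by linarith [hσ0.lt_or_gt.resolve_right hσ])
    refine ⟨-k, ?_⟩
    simpa only [Int.cast_neg, neg_mul, mul_neg, abs_neg] using hk
  obtain ⟨k, hk, -⟩ := existsUnique_add_zsmul_mem_Ico hσ x 0
  rw [zero_add, zsmul_eq_mul, Set.mem_Ico] at hk
  rw [abs_of_pos hσ] at hσ1 ⊢
  have hprev : x + ((k - 1 : ℤ) : ℝ) * σ = -(σ - (x + k * σ)) := by push_cast; ring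
  generalize hv : x + k * σ = v at hk hprev
  rcases mul_abs_sub_le_or_mul_abs_add_le hε (u := σ - v) (v := v) (by linarith) hk.1
    (by linarith) with h | h
  · refine ⟨k - 1, ?_, ?_⟩ <;> rw [hprev]
    · rw [abs_neg, abs_of_nonneg (by linarith)]; linarith
    · rw [show -(σ - v) * (-(σ - v) + ε) = (σ - v) * (σ - v - ε) by ring, abs_mul,
        abs_of_nonneg (by linarith : 0 ≤ σ - v)]
      linarith
  · refine ⟨k, ?_, ?_⟩ <;> rw [hv]
    · rw [abs_of_nonneg hk.1]; exact hk.2.le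
    rw [abs_mul, abs_of_nonneg hk.1]
    linarith

lemma exists_abs_mul_sub_sub_le_of_isCoprime {θ : ℝ} {p q : ℤ} (hpq : IsCoprime p q) (hq : 0 < q)
    (hδ : q * θ - p ≠ 0) (hΔ : q * |q * θ - p| ≤ 1) (γ c : ℝ) :
    ∃ n m : ℤ, |n * θ - m - γ| ≤ |q * θ - p| ∧ |(n + c) * (n * θ - m - γ)| ≤ 1 / 4 := by
  set δ : ℝ := q * θ - p
  have hqR : (0 : ℝ) < q := by exact_mod_cast hq
  obtain ⟨x, y, hxy⟩ := hpq
  set C : ℤ := round (q * γ + c * δ)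
  set ε : ℝ := q * γ + c * δ - C
  obtain ⟨k, hX, hXε⟩ := exists_int_abs_add_mul_le (abs_sub_round (q * γ + c * δ))
    (mul_ne_zero hqR.ne' hδ) (by rwa [abs_mul, abs_of_pos hqR]) (C * x * δ - (q * γ - C))
  set X : ℝ := C * x * δ - (q * γ - C) + k * (q * δ)
  set n : ℤ := C * x + k * q
  set m : ℤ := k * p - C * y
  have hE : (q : ℝ) * (n * θ - m - γ) = X := by
    have : (C : ℝ) * (x * p + y * q) = C := by exact_mod_cast by rw [hxy, mul_one]
    simp only [X, δ, n, m]; push_cast; linear_combination this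
  have hn : (n + c) * δ = X + ε := by
    simp only [X, ε, n]; push_cast; ring
  refine ⟨n, m, ?_, ?_⟩
  · rw [← mul_le_mul_iff_right₀ hqR, ← abs_of_pos hqR, ← abs_mul, ← abs_mul, hE]
    exact hX
  · have hσ : 0 < |(q : ℝ) * δ| := abs_pos.mpr (mul_ne_zero hqR.ne' hδ)
    rw [← mul_le_mul_iff_left₀ hσ, ← abs_mul]
    calc |(n + c) * (n * θ - m - γ) * (q * δ)| = |X * (X + ε)| := by
          rw [show (n + c) * (n * θ - m - γ) * (q * δ) = (n + c) * δ * (q * (n * θ - m - γ)) by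
            ring, hn, hE, mul_comm]
      _ ≤ 1 / 4 * |(q : ℝ) * δ| := by linarith

lemma Irrational.exists_abs_mul_sub_sub_le {θ : ℝ} (hθ : Irrational θ) (γ c : ℝ) {ρ : ℝ}
    (hρ : 0 < ρ) : ∃ n m : ℤ, |n * θ - m - γ| ≤ ρ ∧ |(n + c) * (n * θ - m - γ)| ≤ 1 / 4 := by
  obtain ⟨N, hN⟩ := exists_nat_one_div_lt hρ
  obtain ⟨r, hr, hrN⟩ := Real.exists_rat_abs_sub_le_and_den_le θ N.succ_pos
  have hden : (0 : ℝ) < r.den := by exact_mod_cast r.den_pos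
  have hδ : (r.den : ℤ) * θ - r.num = r.den * (θ - r) := by
    rw [Rat.cast_def]; push_cast; field_simp
  have hδ_le : |((r.den : ℤ) : ℝ) * θ - r.num| ≤ 1 / (N + 1 + 1) := by
    rw [hδ, abs_mul, abs_of_pos hden, ← le_div_iff₀' hden, div_div]
    push_cast at hr; exact hr
  have hΔ : ((r.den : ℤ) : ℝ) * |((r.den : ℤ) : ℝ) * θ - r.num| ≤ 1 := by
    have hrN' : ((r.den : ℤ) : ℝ) ≤ N + 1 := by exact_mod_cast hrN
    calc ((r.den : ℤ) : ℝ) * |((r.den : ℤ) : ℝ) * θ - r.num| ≤ (N + 1) * (1 / (N + 1 + 1)) :=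
          mul_le_mul hrN' hδ_le (abs_nonneg _) (by positivity)
      _ ≤ 1 := by rw [mul_one_div, div_le_one (by positivity)]; linarith
  obtain ⟨n, m, h⟩ := exists_abs_mul_sub_sub_le_of_isCoprime (p := r.num) (q := r.den)
    (Int.isCoprime_iff_gcd_eq_one.mpr r.reduced) (by exact_mod_cast r.den_pos)
    (by rw [hδ]; exact mul_ne_zero hden.ne' (sub_ne_zero.mpr (hθ.ne_rat r))) hΔ γ c
  refine ⟨n, m, h.1.trans (hδ_le.trans ?_), h.2⟩
  exact (one_div_le_one_div_of_le (by positivity) (by linarith)).trans hN.le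

lemma Irrational.exists_arithProg_abs_mul_sub_le {ξ : ℝ} (hξ : Irrational ξ) {a b : ℤ} (ha : 0 < a)
    (hb : 0 < b) (r s : ℝ) {ρ : ℝ} (hρ : 0 < ρ) :
    ∃ m n : ℤ, |(b * n + s) * ξ - (a * m + r)| ≤ ρ ∧
      |b * n + s| * |(b * n + s) * ξ - (a * m + r)| ≤ a * b / 4 := by
  have haR : (0 : ℝ) < a := by exact_mod_cast ha
  have hbR : (0 : ℝ) < b := by exact_mod_cast hb
  have hθ : Irrational (b * ξ / a) := (hξ.intCast_mul hb.ne').div_intCast ha.ne'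
  obtain ⟨n, m, hsmall, hprod⟩ :=
    hθ.exists_abs_mul_sub_sub_le ((r - s * ξ) / a) (s / b) (div_pos hρ haR)
  have hQ : (b : ℝ) * n + s = b * (n + s / b) := by field_simp
  have hE : (b * n + s) * ξ - (a * m + r) = a * (n * (b * ξ / a) - m - (r - s * ξ) / a) := by
    field_simp; ring
  refine ⟨m, n, ?_, ?_⟩
  · rw [hE, abs_mul, abs_of_pos haR, ← le_div_iff₀' haR]
    exact hsmall
  · rw [← abs_mul, hE, hQ,
      show (b : ℝ) * (n + s / b) * (a * (n * (b * ξ / a) - m - (r - s * ξ) / a)) =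
        a * b * ((n + s / b) * (n * (b * ξ / a) - m - (r - s * ξ) / a)) by ring,
      abs_mul, abs_of_pos (mul_pos haR hbR)]
    linarith [mul_le_mul_of_nonneg_left hprod (mul_pos haR hbR).le]

lemma Set.infinite_of_forall_exists_le_of_pos {α : Type*} {s : Set α} (f : α → ℝ)
    (hpos : ∀ x ∈ s, 0 < f x) (hsmall : ∀ ρ > 0, ∃ x ∈ s, f x ≤ ρ) : s.Infinite := by
  intro hfin
  obtain ⟨x₀, hx₀, -⟩ := hsmall 1 one_pos
  obtain ⟨x, hx, hmin⟩ := s.exists_min_image f hfin ⟨x₀, hx₀⟩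
  obtain ⟨y, hy, hfy⟩ := hsmall (f x / 2) (half_pos (hpos x hx))
  linarith [hmin y hy, hpos x hx]

lemma abs_sub_div_le_div_sq_of_abs_mul_abs_le {ξ P Q K : ℝ} (hQ : Q ≠ 0)
    (h : |Q| * |Q * ξ - P| ≤ K) : |ξ - P / Q| ≤ K / Q ^ 2 := by
  have hQ' : 0 < |Q| := abs_pos.mpr hQ
  rw [show ξ - P / Q = (Q * ξ - P) / Q by field_simp, abs_div, ← sq_abs,
    le_div_iff₀ (by positivity), sq, ← mul_assoc, div_mul_cancel₀ _ hQ'.ne', mul_comm]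
  exact h

/-- For any irrational ξ and integers a ≥ 1, b ≥ 1, 0 ≤ r < a, 0 ≤ s < b
with (r,s) ≠ (0,0), there are infinitely many pairs (m,n) ∈ ℤ² with
|ξ − (am+r)/(bn+s)| ≤ ab/(4(bn+s)²). -/
theorem asymptotic_approx_arith_progressions
    (ξ : ℝ) (hξ : Irrational ξ) (a b r s : ℤ)
    (ha : 1 ≤ a) (hb : 1 ≤ b) (hr0 : 0 ≤ r) (hra : r ≤ a - 1)
    (hs0 : 0 ≤ s) (hsb : s ≤ b - 1) (hrs : ¬(r = 0 ∧ s = 0)) :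
    {mn : ℤ × ℤ | b * mn.2 + s ≠ 0 ∧
      |ξ - ((a * mn.1 + r : ℤ) : ℝ) / ((b * mn.2 + s : ℤ) : ℝ)| ≤
        ((a * b : ℤ) : ℝ) / (4 * ((b * mn.2 + s : ℤ) : ℝ) ^ 2)}.Infinite := by
  refine Set.infinite_of_forall_exists_le_of_pos
    (fun mn => |((b * mn.2 + s : ℤ) : ℝ) * ξ - ((a * mn.1 + r : ℤ) : ℝ)|) ?_ fun ρ hρ => ?_
  · rintro ⟨m, n⟩ ⟨hQ, -⟩
    exact abs_pos.mpr (sub_ne_zero.mpr ((hξ.intCast_mul hQ).ne_int _))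
  obtain ⟨m, n, hsmall, hprod⟩ := hξ.exists_arithProg_abs_mul_sub_le (by omega : 0 < a)
    (by omega : 0 < b) r s (lt_min hρ one_half_pos)
  have hQ : b * n + s ≠ 0 := by
    intro hQ
    have hP : a * m + r = 0 := by
      rw [← Int.abs_lt_one_iff, ← Int.cast_lt (R := ℝ)]
      have : ((b * n + s : ℤ) : ℝ) = 0 := by exact_mod_cast hQ
      push_cast at this ⊢
      rw [this, zero_mul, zero_sub, abs_neg] at hsmall
      linarith [min_le_right ρ (1 / 2)]
    exact hrs ⟨Int.eq_zero_of_dvd_of_nonneg_of_lt (n := a) hr0 (by omega) ⟨-m, by linarith⟩,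
      Int.eq_zero_of_dvd_of_nonneg_of_lt (n := b) hs0 (by omega) ⟨-n, by linarith⟩⟩
  refine ⟨(m, n), ⟨hQ, ?_⟩, ?_⟩
  · have h := abs_sub_div_le_div_sq_of_abs_mul_abs_le (P := ((a * m + r : ℤ) : ℝ))
      (Int.cast_ne_zero.mpr hQ) (by push_cast; exact hprod)
    rwa [div_div, ← Int.cast_mul] at h
  · push_cast
    exact hsmall.trans (min_le_left _ _)
end

section
/- Let a₁, a₂ ≥ 0, b₁, b₂ ≥ 0 and m₁, m₂ ≥ 1 be integers. The system of congruences a₁x ≡ b₁ (mod m₁) and a₂x ≡ b₂ (mod m₂) has a solution x ∈ ℤ if and only if gcd(m₁,a₁) ∣ b₁, gcd(m₂,a₂) ∣ b₂, and gcd(a₁m₂, a₂m₁) ∣ (a₁b₂ − a₂b₁). -/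
/-!
Each congruence `a x ≡ b [ZMOD m]` is solvable exactly when `gcd m a ∣ b`, and a solution `c`
makes every `x ≡ c` modulo `m / gcd m a` a solution. Two such classes meet when the gcd of their
moduli divides `c₁ - c₂`. The identity
`a₁ a₂ (c₁ - c₂) + (a₁ b₂ - a₂ b₁) = a₁ (b₂ - a₂ c₂) - a₂ (b₁ - a₁ c₁)` shows that
`gcd (a₁ m₂) (a₂ m₁)` divides the left side: with `c₁ = c₂ = x` this is necessity; for
sufficiency it gives `gcd (a₁ m₂) (a₂ m₁) ∣ a₁ a₂ (c₁ - c₂)`, and cancelling `gcd mᵢ aᵢ` and the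
cofactors `aᵢ / gcd mᵢ aᵢ`, which are coprime to the reduced moduli, leaves the CRT condition.
-/

namespace Int

variable {m m₁ m₂ a a₁ a₂ b b₁ b₂ c c₁ c₂ x : ℤ}

theorem gcd_dvd_of_mul_modEq (h : a * x ≡ b [ZMOD m]) : (m.gcd a : ℤ) ∣ b := by
  simpa using dvd_add ((gcd_dvd_left m a).trans h.dvd) ((gcd_dvd_right m a).mul_right x)

theorem exists_mul_modEq_of_gcd_dvd (h : (m.gcd a : ℤ) ∣ b) : ∃ c, a * c ≡ b [ZMOD m] := by
  obtain ⟨k, rfl⟩ := h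
  refine ⟨gcdB m a * k, modEq_iff_dvd.mpr ⟨gcdA m a * k, ?_⟩⟩
  rw [gcd_eq_gcd_ab]
  ring

theorem mul_modEq_of_modEq_div_gcd (hc : a * c ≡ b [ZMOD m]) (hx : x ≡ c [ZMOD m / m.gcd a]) :
    a * x ≡ b [ZMOD m] := by
  have hm : m ∣ a * (m / m.gcd a) := by
    rw [← Int.mul_ediv_assoc _ (gcd_dvd_left _ _), mul_comm,
      Int.mul_ediv_assoc _ (gcd_dvd_right _ _)]
    exact dvd_mul_right m _
  exact ((hx.mul_left' (c := a)).of_dvd hm).trans hc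

theorem exists_modEq_and_modEq_of_gcd_dvd_sub {n₁ n₂ : ℤ} (h : (n₁.gcd n₂ : ℤ) ∣ c₁ - c₂) :
    ∃ x, x ≡ c₁ [ZMOD n₁] ∧ x ≡ c₂ [ZMOD n₂] := by
  obtain ⟨k, hk⟩ := h
  rw [gcd_eq_gcd_ab] at hk
  refine ⟨c₁ - n₁ * (gcdA n₁ n₂ * k), modEq_iff_dvd.mpr ⟨gcdA n₁ n₂ * k, by ring⟩,
    modEq_iff_dvd.mpr ⟨-(gcdB n₁ n₂ * k), by linear_combination -hk⟩⟩

theorem gcd_mul_dvd_mul_sub_add (h₁ : a₁ * c₁ ≡ b₁ [ZMOD m₁]) (h₂ : a₂ * c₂ ≡ b₂ [ZMOD m₂]) :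
    ((a₁ * m₂).gcd (a₂ * m₁) : ℤ) ∣ a₁ * a₂ * (c₁ - c₂) + (a₁ * b₂ - a₂ * b₁) := by
  have key : a₁ * a₂ * (c₁ - c₂) + (a₁ * b₂ - a₂ * b₁) =
      a₁ * (b₂ - a₂ * c₂) - a₂ * (b₁ - a₁ * c₁) := by ring
  rw [key]
  exact dvd_sub ((gcd_dvd_left _ _).trans (mul_dvd_mul_left a₁ h₂.dvd))
    ((gcd_dvd_right _ _).trans (mul_dvd_mul_left a₂ h₁.dvd))

theorem gcd_div_gcd_dvd_of_gcd_mul_dvd {t : ℤ} (hm₁ : m₁ ≠ 0) (hm₂ : m₂ ≠ 0)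
    (h : ((a₁ * m₂).gcd (a₂ * m₁) : ℤ) ∣ a₁ * a₂ * t) :
    ((m₁ / m₁.gcd a₁).gcd (m₂ / m₂.gcd a₂) : ℤ) ∣ t := by
  set d₁ : ℤ := (m₁.gcd a₁ : ℤ)
  set d₂ : ℤ := (m₂.gcd a₂ : ℤ)
  set g : ℤ := ((m₁ / d₁).gcd (m₂ / d₂) : ℤ)
  have hd₁ : 0 < m₁.gcd a₁ := gcd_pos_of_ne_zero_left _ hm₁
  have hd₂ : 0 < m₂.gcd a₂ := gcd_pos_of_ne_zero_left _ hm₂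
  have h₁ : d₁ * g ∣ m₁ := mul_dvd_of_dvd_div (gcd_dvd_left _ _) (gcd_dvd_left _ _)
  have h₂ : d₂ * g ∣ m₂ := mul_dvd_of_dvd_div (gcd_dvd_left _ _) (gcd_dvd_right _ _)
  have hG : d₁ * d₂ * g ∣ ((a₁ * m₂).gcd (a₂ * m₁) : ℤ) := by
    refine dvd_coe_gcd ?_ ?_
    · rw [mul_assoc]; exact mul_dvd_mul (gcd_dvd_right _ _) h₂
    · rw [mul_comm d₁, mul_assoc]; exact mul_dvd_mul (gcd_dvd_right _ _) h₁
  have ht : a₁ * a₂ * t = d₁ * d₂ * ((a₁ / d₁) * (a₂ / d₂) * t) := by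
    have hA₁ : d₁ * (a₁ / d₁) = a₁ := Int.mul_ediv_cancel' (gcd_dvd_right _ _)
    have hA₂ : d₂ * (a₂ / d₂) = a₂ := Int.mul_ediv_cancel' (gcd_dvd_right _ _)
    linear_combination -(d₂ * (a₂ / d₂) * t) * hA₁ - (a₁ * t) * hA₂
  have hg : g ∣ (a₁ / d₁) * (a₂ / d₂) * t := by
    rw [ht] at h
    exact (mul_dvd_mul_iff_left (by positivity)).mp (hG.trans h)
  have cop₁ : IsCoprime g (a₁ / d₁) :=
    (isCoprime_iff_gcd_eq_one.mpr (gcd_ediv_gcd_ediv_gcd hd₁)).of_isCoprime_of_dvd_left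
      (gcd_dvd_left _ _)
  have cop₂ : IsCoprime g (a₂ / d₂) :=
    (isCoprime_iff_gcd_eq_one.mpr (gcd_ediv_gcd_ediv_gcd hd₂)).of_isCoprime_of_dvd_left
      (gcd_dvd_right _ _)
  exact (cop₁.mul_right cop₂).dvd_of_dvd_mul_left hg

end Int

theorem system_of_two_linear_congruences_solvable_iff_general
    (a₁ a₂ b₁ b₂ m₁ m₂ : ℤ)
    (hm₁ : 1 ≤ m₁) (hm₂ : 1 ≤ m₂) :
    (∃ x : ℤ, a₁ * x ≡ b₁ [ZMOD m₁] ∧ a₂ * x ≡ b₂ [ZMOD m₂]) ↔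
      ((Int.gcd m₁ a₁ : ℤ) ∣ b₁ ∧ (Int.gcd m₂ a₂ : ℤ) ∣ b₂ ∧
        (Int.gcd (a₁ * m₂) (a₂ * m₁) : ℤ) ∣ (a₁ * b₂ - a₂ * b₁)) := by
  constructor
  · rintro ⟨x, h₁, h₂⟩
    refine ⟨Int.gcd_dvd_of_mul_modEq h₁, Int.gcd_dvd_of_mul_modEq h₂, ?_⟩
    simpa using Int.gcd_mul_dvd_mul_sub_add h₁ h₂
  · rintro ⟨hb₁, hb₂, hG⟩
    obtain ⟨c₁, hc₁⟩ := Int.exists_mul_modEq_of_gcd_dvd hb₁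
    obtain ⟨c₂, hc₂⟩ := Int.exists_mul_modEq_of_gcd_dvd hb₂
    obtain ⟨x, hx₁, hx₂⟩ := Int.exists_modEq_and_modEq_of_gcd_dvd_sub
      (Int.gcd_div_gcd_dvd_of_gcd_mul_dvd (by omega) (by omega)
        ((dvd_add_left hG).mp (Int.gcd_mul_dvd_mul_sub_add hc₁ hc₂)))
    exact ⟨x, Int.mul_modEq_of_modEq_div_gcd hc₁ hx₁, Int.mul_modEq_of_modEq_div_gcd hc₂ hx₂⟩

/-- The system a₁x ≡ b₁ (mod m₁), a₂x ≡ b₂ (mod m₂) has an integer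
solution iff gcd(m₁,a₁) ∣ b₁, gcd(m₂,a₂) ∣ b₂ and gcd(a₁m₂, a₂m₁) ∣ a₁b₂ − a₂b₁. -/
theorem system_of_two_linear_congruences_solvable_iff
    (a₁ a₂ b₁ b₂ m₁ m₂ : ℤ)
    (ha₁ : 0 ≤ a₁) (ha₂ : 0 ≤ a₂) (hb₁ : 0 ≤ b₁) (hb₂ : 0 ≤ b₂)
    (hm₁ : 1 ≤ m₁) (hm₂ : 1 ≤ m₂) :
    (∃ x : ℤ, a₁ * x ≡ b₁ [ZMOD m₁] ∧ a₂ * x ≡ b₂ [ZMOD m₂]) ↔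
      ((Int.gcd m₁ a₁ : ℤ) ∣ b₁ ∧ (Int.gcd m₂ a₂ : ℤ) ∣ b₂ ∧
        (Int.gcd (a₁ * m₂) (a₂ * m₁) : ℤ) ∣ (a₁ * b₂ - a₂ * b₁)) :=
  system_of_two_linear_congruences_solvable_iff_general a₁ a₂ b₁ b₂ m₁ m₂ hm₁ hm₂
end

section
/- For any integer u ≥ 1 and any divisor δ of u, the sum over square-free positive integers d with gcd(d,u) = δ of μ(d)/d² equals (μ(δ)/δ²)·(ζ(2)·∏_{π prime, π∣u}(1 − 1/π²))⁻¹. -/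
/-!
Writing `d = δ m`, the conditions on `d` say that `δ` and `m` are squarefree and `m` is coprime
to `u`, and then `μ(δm)/(δm)² = μ(δ)/δ² · μ(m)/m²`. So the sum is `μ(δ)/δ²` times
`∑_{(m,u)=1} μ(m)/m²`, whose Euler product `∏_{p ∤ u} (1 - p⁻²)` is the inverse of
`ζ(2) ∏_{p ∣ u} (1 - p⁻²)` because `ζ(2) = ∏_p (1 - p⁻²)⁻¹`. The argument works for any
completely multiplicative, absolutely summable `f` in place of `n ↦ n⁻²`.
-/

open ArithmeticFunction
open scoped Classical

open scoped ArithmeticFunction.Moebius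
open Nat (Primes)

lemma hasProd_ite_dvd_primeFactors {M : Type*} [CommMonoid M] [TopologicalSpace M]
    (g : ℕ → M) {u : ℕ} (hu : u ≠ 0) :
    HasProd (fun p : Primes ↦ if (p : ℕ) ∣ u then g p else 1) (∏ p ∈ u.primeFactors, g p) := by
  have hprod : ∏ p ∈ u.primeFactors, g p =
      ∏ p ∈ u.primeFactors.subtype Nat.Prime, if (p : ℕ) ∣ u then g p else 1 := by
    rw [Finset.prod_subtype_eq_prod_filter (fun p ↦ if p ∣ u then g p else 1),
      Finset.filter_true_of_mem fun p hp ↦ Nat.prime_of_mem_primeFactors hp]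
    exact Finset.prod_congr rfl fun p hp ↦ (if_pos (Nat.dvd_of_mem_primeFactors hp)).symm
  rw [hprod]
  refine hasProd_prod_of_ne_finset_one fun p hp ↦ if_neg fun hpu ↦ hp ?_
  exact Finset.mem_subtype.mpr <| Nat.mem_primeFactors.mpr ⟨p.prop, hpu, hu⟩

lemma squarefree_mul_and_gcd_eq_iff {δ m u : ℕ} (hδ : δ ∣ u) :
    Squarefree (δ * m) ∧ (δ * m).gcd u = δ ↔ Squarefree δ ∧ Squarefree m ∧ m.Coprime u := by
  obtain ⟨v, rfl⟩ := hδ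
  rw [Nat.squarefree_mul_iff, Nat.gcd_mul_left]
  constructor
  · rintro ⟨⟨hδm, hδ, hm⟩, hgcd⟩
    have hmv : m.Coprime v := (Nat.mul_eq_left hδ.ne_zero).mp hgcd
    exact ⟨hδ, hm, Nat.Coprime.mul_right hδm.symm hmv⟩
  · rintro ⟨hδ, hm, hmu⟩
    refine ⟨⟨(hmu.coprime_dvd_right (dvd_mul_right δ v)).symm, hδ, hm⟩, ?_⟩
    rw [Nat.Coprime.gcd_eq_one (hmu.coprime_dvd_right (dvd_mul_left v δ)), mul_one]

section CoprimeMoebius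

variable {F : Type*} [NormedField F]

noncomputable def coprimeMoebiusMul (f : ℕ → F) (u n : ℕ) : F :=
  if n.Coprime u then μ n * f n else 0

lemma coprimeMoebiusMul_mul_of_coprime (f : ℕ →*₀ F) (u : ℕ) {m n : ℕ} (hmn : m.Coprime n) :
    coprimeMoebiusMul f u (m * n) = coprimeMoebiusMul f u m * coprimeMoebiusMul f u n := by
  simp only [coprimeMoebiusMul, Nat.coprime_mul_iff_left,
    isMultiplicative_moebius.map_mul_of_coprime hmn, map_mul, Int.cast_mul, mul_mul_mul_comm]
  split_ifs <;> simp_all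

lemma norm_coprimeMoebiusMul_le (f : ℕ → F) (u n : ℕ) :
    ‖coprimeMoebiusMul f u n‖ ≤ ‖f n‖ := by
  unfold coprimeMoebiusMul
  split_ifs
  · rw [norm_mul]
    refine mul_le_of_le_one_left (norm_nonneg _) ?_
    rcases moebius_eq_or n with h | h | h <;> simp [h]
  · simp

lemma tsum_coprimeMoebiusMul_prime_pow (f : ℕ →*₀ F) (u : ℕ) {p : ℕ} (hp : p.Prime) :
    ∑' e, coprimeMoebiusMul f u (p ^ e) = if p ∣ u then 1 else 1 - f p := by
  rw [tsum_eq_sum (s := Finset.range 2)]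
  · simp [coprimeMoebiusMul, Finset.sum_range_succ, hp.coprime_iff_not_dvd, moebius_apply_prime hp]
    split_ifs <;> ring
  · intro e he
    have he1 : 1 < e := by simpa using he
    simp [coprimeMoebiusMul, moebius_apply_prime_pow hp (by omega : e ≠ 0), he1.ne']

lemma ite_squarefree_mul_and_gcd_eq (f : ℕ →*₀ F) {δ u : ℕ} (hδ : δ ∣ u) (m : ℕ) :
    (if Squarefree (δ * m) ∧ (δ * m).gcd u = δ then (μ (δ * m) : F) * f (δ * m) else 0) =
      μ δ * f δ * coprimeMoebiusMul f u m := by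
  simp only [squarefree_mul_and_gcd_eq_iff hδ, coprimeMoebiusMul]
  by_cases hmu : m.Coprime u
  · rw [isMultiplicative_moebius.map_mul_of_coprime (hmu.coprime_dvd_right hδ).symm, map_mul]
    by_cases hδ : Squarefree δ <;> by_cases hm : Squarefree m <;>
      simp [*, moebius_eq_zero_of_not_squarefree, mul_mul_mul_comm]
  · simp [hmu]

lemma tsum_ite_squarefree_and_gcd_eq (f : ℕ →*₀ F) {δ u : ℕ} (hu : u ≠ 0) (hδ : δ ∣ u) :
    ∑' d, (if Squarefree d ∧ d.gcd u = δ then (μ d : F) * f d else 0) =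
      μ δ * f δ * ∑' m, coprimeMoebiusMul f u m := by
  have hsupp : (Function.support fun d ↦
      if Squarefree d ∧ d.gcd u = δ then (μ d : F) * f d else 0) ⊆ Set.range (δ * ·) := by
    intro d hd
    obtain ⟨⟨-, hgcd⟩, -⟩ := ite_ne_right_iff.mp hd
    obtain ⟨m, rfl⟩ := hgcd ▸ Nat.gcd_dvd_left d u
    exact ⟨m, rfl⟩
  rw [← (mul_right_injective₀ (ne_zero_of_dvd_ne_zero hu hδ)).tsum_eq hsupp, ← tsum_mul_left]
  exact tsum_congr (ite_squarefree_mul_and_gcd_eq f hδ)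

variable [CompleteSpace F]

lemma hasProd_coprimeMoebiusMul (f : ℕ →*₀ F) (hf : Summable (‖f ·‖)) (u : ℕ) :
    HasProd (fun p : Primes ↦ if (p : ℕ) ∣ u then 1 else 1 - f p)
      (∑' n, coprimeMoebiusMul f u n) := by
  have h := EulerProduct.eulerProduct_hasProd (by simp [coprimeMoebiusMul])
    (coprimeMoebiusMul_mul_of_coprime f u)
    (hf.of_nonneg_of_le (fun _ ↦ norm_nonneg _) (norm_coprimeMoebiusMul_le f u))
    (by simp [coprimeMoebiusMul])
  convert h using 2 with p
  exact (tsum_coprimeMoebiusMul_prime_pow f u p.prop).symm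

lemma tsum_coprimeMoebiusMul_eq (f : ℕ →*₀ F) (hf : Summable (‖f ·‖)) {u : ℕ} (hu : u ≠ 0) :
    ∑' n, coprimeMoebiusMul f u n = ((∑' n, f n) * ∏ p ∈ u.primeFactors, (1 - f p))⁻¹ := by
  have h := (hasProd_coprimeMoebiusMul f hf u).mul
    ((EulerProduct.eulerProduct_completely_multiplicative_hasProd hf).mul
      (hasProd_ite_dvd_primeFactors (fun p ↦ 1 - f p) hu))
  have hfactor (p : Primes) : (if (p : ℕ) ∣ u then 1 else 1 - f p) *
      ((1 - f p)⁻¹ * if (p : ℕ) ∣ u then 1 - f p else 1) = 1 := by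
    have hp : ‖f p‖ < 1 := hf.of_norm.norm_lt_one (f := (f : ℕ →* F)) p.prop.one_lt
    have : 1 - f p ≠ 0 := sub_ne_zero.mpr fun h ↦ by simp [← h] at hp
    split_ifs <;> field_simp
  simp only [hfactor] at h
  exact eq_inv_of_mul_eq_one_left (h.unique hasProd_one)

end CoprimeMoebius

/-- For u ≥ 1 and δ ∣ u, the sum over square-free positive d with
gcd(d,u) = δ of μ(d)/d² equals (μ(δ)/δ²)·(ζ(2)·∏_{π ∣ u prime}(1 − 1/π²))⁻¹. -/
theorem tsum_moebius_div_sq_gcd_eq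
    (u δ : ℕ) (hu : 1 ≤ u) (hδ : δ ∣ u) :
    ∑' d : ℕ, (if Squarefree d ∧ Nat.gcd d u = δ then (moebius d : ℝ) / (d : ℝ) ^ 2 else 0) =
      (moebius δ : ℝ) / (δ : ℝ) ^ 2 *
        ((Real.pi ^ 2 / 6) * ∏ π ∈ u.primeFactors, (1 - 1 / (π : ℝ) ^ 2))⁻¹ := by
  have hu0 : u ≠ 0 := Nat.one_le_iff_ne_zero.mp hu
  let f : ℕ →*₀ ℝ := invMonoidWithZeroHom.comp
    ((powMonoidWithZeroHom two_ne_zero).comp (Nat.castRingHom ℝ).toMonoidWithZeroHom)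
  have hf_apply (n : ℕ) : f n = ((n : ℝ) ^ 2)⁻¹ := rfl
  have hf : Summable (‖f ·‖) := by simp [hf_apply]
  have hzeta : ∑' n, f n = Real.pi ^ 2 / 6 := by
    simpa [hf_apply, one_div] using hasSum_zeta_two.tsum_eq
  have key := tsum_ite_squarefree_and_gcd_eq f hu0 hδ
  rw [tsum_coprimeMoebiusMul_eq f hf hu0, hzeta] at key
  simpa only [hf_apply, div_eq_mul_inv, one_mul] using key
end

section
/- If a real number α has the property that for every sufficiently large real Q there exist integers p, q with 1 ≤ q ≤ Q and |α − p/q| ≤ 1/(2qQ), then α is rational. -/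
/-!
Suppose `α` is irrational and take a first approximation at a half-integer scale `Q₁`, which
forces its denominator below `Q₁`. In lowest terms it is `r` with denominator `d < Q₁`, so that
`ε = |α - r|` is positive and `c = d²ε < 1/2`. At the larger scale `Q` defined by `dεQ = 1 - c`,
`r` is no longer admissible, so the new approximation `p' / q'` differs from it and hence
`1 ≤ d q' |r - p' / q'| ≤ dQε + d / (2Q) = 1 - c + c / (2 - 2c) < 1`.
-/

def IsHalfDirichletApprox (α Q : ℝ) (p q : ℤ) : Prop :=
  1 ≤ q ∧ (q : ℝ) ≤ Q ∧ |α - p / q| ≤ 1 / (2 * q * Q)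

lemma Rat.den_le_of_cast_eq_div {r : ℚ} {p q : ℤ} (hq : 0 < q) (h : (r : ℝ) = p / q) :
    (r.den : ℝ) ≤ q := by
  have hr : r = Rat.divInt p q := by
    rw [Rat.divInt_eq_div]
    exact_mod_cast h
  have : (r.den : ℤ) ≤ q := Int.le_of_dvd hq (hr ▸ Rat.den_dvd p q)
  exact_mod_cast this

lemma one_le_mul_mul_abs_div_sub_div {p q p' q' : ℤ} (hq : 0 < q) (hq' : 0 < q')
    (hne : (p / q : ℝ) ≠ p' / q') : 1 ≤ (q : ℝ) * q' * |(p / q : ℝ) - p' / q'| := by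
  have hq₀ : (q : ℝ) ≠ 0 := by positivity
  have hq₀' : (q' : ℝ) ≠ 0 := by positivity
  have hcross : (q : ℝ) * q' * ((p / q : ℝ) - p' / q') = ((p * q' - p' * q : ℤ) : ℝ) := by
    push_cast
    field_simp
  have hcross_ne : p * q' - p' * q ≠ 0 := by
    intro h0
    apply hne
    rw [div_eq_div_iff hq₀ hq₀']
    exact_mod_cast sub_eq_zero.mp h0
  calc (1 : ℝ) ≤ |((p * q' - p' * q : ℤ) : ℝ)| := by exact_mod_cast Int.one_le_abs hcross_ne
    _ = (q : ℝ) * q' * |(p / q : ℝ) - p' / q'| := by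
      rw [← hcross, abs_mul, abs_of_pos (by positivity : (0 : ℝ) < q * q')]

namespace IsHalfDirichletApprox

variable {α Q : ℝ}

lemma mul_abs_sub_le {p q : ℤ} (happ : IsHalfDirichletApprox α Q p q) :
    (q : ℝ) * |α - p / q| ≤ 1 / (2 * Q) := by
  obtain ⟨hq, -, hε⟩ := happ
  have hq₀ : (0 : ℝ) < q := by exact_mod_cast hq
  calc (q : ℝ) * |α - p / q| ≤ q * (1 / (2 * q * Q)) := by gcongr
    _ = 1 / (2 * Q) := by field_simp

lemma not_of_den_mul_abs_sub_mul_eq {r : ℚ} (hε : 0 < |α - r|)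
    (hc : (r.den : ℝ) ^ 2 * |α - r| < 1 / 2)
    (hQ : r.den * |α - r| * Q = 1 - r.den ^ 2 * |α - r|) (p' q' : ℤ) :
    ¬ IsHalfDirichletApprox α Q p' q' := by
  rintro ⟨hq', hq'Q, hε'⟩
  set ε := |α - r|
  set d : ℝ := (r.den : ℝ)
  set c := d ^ 2 * ε
  have hd : 0 < d := by positivity
  have hq₀' : (0 : ℝ) < q' := by exact_mod_cast hq'
  have hQ₀ : 0 < Q := hq₀'.trans_le hq'Q
  -- `r` is in lowest terms, so `q' ≥ d`, whereas `2dεQ = 2 - 2c > 1`.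
  have hne : (r : ℝ) ≠ p' / q' := by
    intro heq
    have hdq' : d ≤ q' := Rat.den_le_of_cast_eq_div (by omega) heq
    rw [← heq, le_div_iff₀ (by positivity)] at hε'
    nlinarith [mul_le_mul_of_nonneg_left hdq' (by positivity : 0 ≤ 2 * ε * Q)]
  have hsep : 1 ≤ d * q' * |(r : ℝ) - p' / q'| := by
    have hr : (r : ℝ) = r.num / ((r.den : ℤ) : ℝ) := by rw [Int.cast_natCast, Rat.cast_def]
    rw [hr] at hne ⊢
    simpa only [Int.cast_natCast] using
      one_le_mul_mul_abs_div_sub_div (by positivity) (by omega) hne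
  have htri : |(r : ℝ) - p' / q'| ≤ ε + 1 / (2 * q' * Q) :=
    (abs_sub_le _ α _).trans (add_le_add (abs_sub_comm (α : ℝ) _ ▸ le_rfl) hε')
  have hbound : 1 ≤ d * Q * ε + d / (2 * Q) :=
    calc (1 : ℝ) ≤ d * q' * |(r : ℝ) - p' / q'| := hsep
      _ ≤ d * q' * (ε + 1 / (2 * q' * Q)) := by gcongr
      _ = d * q' * ε + d / (2 * Q) := by field_simp
      _ ≤ d * Q * ε + d / (2 * Q) := by gcongr
  have hsecond : d / (2 * Q) = c / (2 - 2 * c) := by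
    rw [div_eq_div_iff (by positivity) (by linarith)]
    linear_combination (-2 * d) * hQ
  have hc₀ : 0 < c := by positivity
  rw [show d * Q * ε = 1 - c by linear_combination hQ, hsecond] at hbound
  have : c ≤ c / (2 - 2 * c) := by linarith
  rw [le_div_iff₀ (by linarith)] at this
  nlinarith

lemma exists_ge_forall_not {p q : ℤ} (happ : IsHalfDirichletApprox α Q p q)
    (hqQ : (q : ℝ) < Q) (hα : α ≠ p / q) :
    ∃ Q' ≥ Q, ∀ p' q', ¬ IsHalfDirichletApprox α Q' p' q' := by
  set r : ℚ := p / q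
  have hr : (r : ℝ) = p / q := by push_cast [r]; rfl
  have hq₀ : (0 : ℝ) < q := by exact_mod_cast happ.1
  have hdq : (r.den : ℝ) ≤ q := Rat.den_le_of_cast_eq_div (by exact_mod_cast hq₀) hr
  have hqε := happ.mul_abs_sub_le
  rw [← hr] at hα hqε
  have hε : 0 < |α - r| := abs_pos.2 (sub_ne_zero.2 hα)
  have hdε : (r.den : ℝ) * |α - r| ≤ 1 / (2 * Q) :=
    (mul_le_mul_of_nonneg_right hdq hε.le).trans hqε
  have hQ₀ : 0 < Q := hq₀.trans hqQ
  have hc : (r.den : ℝ) ^ 2 * |α - r| < 1 / 2 :=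
    calc (r.den : ℝ) ^ 2 * |α - r| = r.den * (r.den * |α - r|) := by ring
      _ ≤ q * (1 / (2 * Q)) := by gcongr
      _ < Q * (1 / (2 * Q)) := by gcongr
      _ = 1 / 2 := by field_simp
  refine ⟨(1 - r.den ^ 2 * |α - r|) / (r.den * |α - r|), ?_,
    not_of_den_mul_abs_sub_mul_eq hε hc (by field_simp)⟩
  rw [ge_iff_le, le_div_iff₀ (by positivity)]
  rw [le_div_iff₀ (by positivity)] at hdε
  nlinarith

end IsHalfDirichletApprox

/-- If for every sufficiently large real Q there are integers p, q with
1 ≤ q ≤ Q and |α − p/q| ≤ 1/(2qQ), then α is rational. -/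
theorem rational_of_improved_dirichlet
    (α : ℝ)
    (h : ∃ Q₀ : ℝ, ∀ Q : ℝ, Q₀ ≤ Q → ∃ p q : ℤ,
      1 ≤ q ∧ (q : ℝ) ≤ Q ∧ |α - (p : ℝ) / (q : ℝ)| ≤ 1 / (2 * (q : ℝ) * Q)) :
    ∃ r : ℚ, α = (r : ℝ) := by
  obtain ⟨Q₀, h⟩ := h
  obtain ⟨N, hN⟩ := exists_nat_ge Q₀
  obtain ⟨p, q, happ⟩ := h (N + 1 / 2) (by linarith)
  have hqN : (q : ℝ) < N + 1 / 2 := by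
    have : q < (N : ℤ) + 1 := by exact_mod_cast (by linarith [happ.2.1] : (q : ℝ) < N + 1)
    have : (q : ℝ) ≤ N := by exact_mod_cast Int.lt_add_one_iff.mp this
    linarith
  by_contra hirr
  obtain ⟨Q, hQ, hnone⟩ := IsHalfDirichletApprox.exists_ge_forall_not happ hqN
    fun hα => hirr ⟨p / q, by push_cast [hα]; rfl⟩
  obtain ⟨p', q', happ'⟩ := h Q (by linarith)
  exact hnone p' q' happ'
end

section
/- Let ξ be a badly approximable irrational, a, b ≥ 1 integers, 0 ≤ r < a, 0 ≤ s < b, and α ∈ ℝ. Let M be an upper bound for the partial quotients of bξ/a. Then for every real Q ≥ 2b there exist integers m, n with 0 ≤ bn+s ≤ Q and |(bn+s)ξ − (am+r) + α| ≤ 2ab(M+2)/Q. -/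
/-- The Gauss-map iteration: the k-th partial quotient of ξ (k ≥ 1) is ⌊gaussIter ξ k⌋. -/
noncomputable def gaussIter (ξ : ℝ) : ℕ → ℝ
  | 0 => ξ
  | n + 1 => 1 / (gaussIter ξ n - ⌊gaussIter ξ n⌋)

/-!
Write `v = bξ/a`. The substitution `(bn + s)ξ - (am + r) + α = a (n v - m + β)` with
`β = (sξ - r + α)/a` reduces the claim to an inhomogeneous approximation problem for `v`
with `0 ≤ n ≤ N ≈ Q/b`. Take the convergent `p/q` of `v` with `q ≤ N < q'`, where `q'` is
the next denominator. As `p` and `q` are coprime, some `0 ≤ n < q` has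
`n p ≡ -round(qβ) (mod q)`, and then `q |n v - m + β| ≤ 1/2 + n |q v - p| < 1/2 + q/q'`.
Bounded partial quotients give `N < q' ≤ (M + 1) q`, so both terms are `O(M/N)`.
-/

theorem gaussIter_succ (v : ℝ) (k : ℕ) :
    gaussIter v (k + 1) = (Int.fract (gaussIter v k))⁻¹ := by
  rw [gaussIter, one_div, Int.self_sub_floor]

theorem gaussIter_eq_floor_add_inv (v : ℝ) (k : ℕ) :
    gaussIter v k = ⌊gaussIter v k⌋ + (gaussIter v (k + 1))⁻¹ := by
  rw [gaussIter_succ, inv_inv, Int.floor_add_fract]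

section GaussIter

variable {v : ℝ}

theorem irrational_gaussIter (hv : Irrational v) (k : ℕ) : Irrational (gaussIter v k) := by
  induction k with
  | zero => exact hv
  | succ k ih => rw [gaussIter_succ]; exact (ih.sub_intCast _).inv

theorem fract_gaussIter_pos (hv : Irrational v) (k : ℕ) : 0 < Int.fract (gaussIter v k) :=
  Int.fract_pos.mpr ((irrational_gaussIter hv k).ne_int _)

theorem one_lt_gaussIter_succ (hv : Irrational v) (k : ℕ) : 1 < gaussIter v (k + 1) := by
  rw [gaussIter_succ]
  exact (one_lt_inv₀ (fract_gaussIter_pos hv k)).mpr (Int.fract_lt_one _)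

theorem one_le_floor_gaussIter_succ (hv : Irrational v) (k : ℕ) :
    1 ≤ ⌊gaussIter v (k + 1)⌋ :=
  Int.le_floor.mpr (by exact_mod_cast (one_lt_gaussIter_succ hv k).le)

end GaussIter

/-- `convNum v (k + 1) / convDen v (k + 1)` is the `k`-th convergent `p_k / q_k` of `v`;
index `0` holds `p₋₁ = 1` (and `q₋₁ = 0` for `convDen`). -/
noncomputable def convNum (v : ℝ) : ℕ → ℤ
  | 0 => 1
  | 1 => ⌊v⌋
  | k + 2 => ⌊gaussIter v (k + 1)⌋ * convNum v (k + 1) + convNum v k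

noncomputable def convDen (v : ℝ) : ℕ → ℤ
  | 0 => 0
  | 1 => 1
  | k + 2 => ⌊gaussIter v (k + 1)⌋ * convDen v (k + 1) + convDen v k

theorem determinant_convNum_convDen (v : ℝ) (k : ℕ) :
    convNum v (k + 1) * convDen v k - convNum v k * convDen v (k + 1) = (-1) ^ (k + 1) := by
  induction k with
  | zero => simp [convNum, convDen]
  | succ k ih =>
    simp only [convNum, convDen]
    linear_combination -ih

theorem isCoprime_convNum_convDen (v : ℝ) (k : ℕ) :
    IsCoprime (convNum v (k + 1)) (convDen v (k + 1)) := by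
  have hsq : (-1 : ℤ) ^ (k + 1) * (-1) ^ (k + 1) = 1 := by rw [← mul_pow]; norm_num
  exact ⟨(-1) ^ (k + 1) * convDen v k, -(-1) ^ (k + 1) * convNum v k,
    by linear_combination (-1) ^ (k + 1) * determinant_convNum_convDen v k + hsq⟩

section Convergents

variable {v : ℝ}

theorem mul_convDen_mul_gaussIter_add (hv : Irrational v) (k : ℕ) :
    v * (convDen v (k + 1) * gaussIter v (k + 1) + convDen v k) =
      convNum v (k + 1) * gaussIter v (k + 1) + convNum v k := by
  induction k with
  | zero =>
    have hx := gaussIter_eq_floor_add_inv v 0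
    have hinv := mul_inv_cancel₀ (zero_lt_one.trans (one_lt_gaussIter_succ hv 0)).ne'
    rw [show gaussIter v 0 = v from rfl] at hx
    simp only [convNum, convDen, zero_add] at hinv ⊢
    push_cast
    linear_combination gaussIter v 1 * hx + hinv
  | succ k ih =>
    have hx := gaussIter_eq_floor_add_inv v (k + 1)
    have hinv := mul_inv_cancel₀ (zero_lt_one.trans (one_lt_gaussIter_succ hv (k + 1))).ne'
    simp only [convNum, convDen]
    push_cast
    linear_combination gaussIter v (k + 2) * ih +
      (convNum v (k + 1) - v * convDen v (k + 1)) * (gaussIter v (k + 2) * hx + hinv)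

theorem one_le_convDen_succ (hv : Irrational v) : ∀ k, 1 ≤ convDen v (k + 1)
  | 0 => le_rfl
  | 1 => by simpa [convDen] using one_le_floor_gaussIter_succ hv 0
  | k + 2 => by
    have h1 := one_le_convDen_succ hv (k + 1)
    have h0 := one_le_convDen_succ hv k
    have ha := one_le_floor_gaussIter_succ hv (k + 1)
    show 1 ≤ ⌊gaussIter v (k + 2)⌋ * convDen v (k + 2) + convDen v (k + 1)
    nlinarith

theorem convDen_nonneg (hv : Irrational v) : ∀ k, 0 ≤ convDen v k
  | 0 => le_rfl
  | k + 1 => zero_le_one.trans (one_le_convDen_succ hv k)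

theorem convDen_add_le (hv : Irrational v) (k : ℕ) :
    convDen v (k + 1) + convDen v k ≤ convDen v (k + 2) := by
  have h1 := one_le_convDen_succ hv k
  have ha := one_le_floor_gaussIter_succ hv k
  simp only [convDen]
  nlinarith

theorem convDen_le_succ (hv : Irrational v) : ∀ k, convDen v k ≤ convDen v (k + 1)
  | 0 => by simp [convDen]
  | k + 1 => by
    have := convDen_add_le hv k
    have := convDen_nonneg hv k
    show convDen v (k + 1) ≤ convDen v (k + 2)
    omega

theorem le_convDen_succ (hv : Irrational v) : ∀ k : ℕ, (k : ℤ) ≤ convDen v (k + 1)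
  | 0 => by simp [convDen]
  | 1 => by exact_mod_cast one_le_convDen_succ hv 1
  | k + 2 => by
    have h1 : (k + 1 : ℤ) ≤ convDen v (k + 2) := by exact_mod_cast le_convDen_succ hv (k + 1)
    have h2 : convDen v (k + 2) + convDen v (k + 1) ≤ convDen v (k + 3) :=
      convDen_add_le hv (k + 1)
    have h3 := one_le_convDen_succ hv k
    show ((k + 2 : ℕ) : ℤ) ≤ convDen v (k + 3)
    push_cast
    omega

theorem convDen_succ_succ_le (hv : Irrational v) {M : ℤ} {k : ℕ}
    (hM : ⌊gaussIter v (k + 1)⌋ ≤ M) : convDen v (k + 2) ≤ (M + 1) * convDen v (k + 1) := by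
  have := convDen_le_succ hv k
  have := one_le_convDen_succ hv k
  simp only [convDen]
  nlinarith

theorem abs_convDen_mul_sub_convNum_lt (hv : Irrational v) (k : ℕ) :
    |convDen v (k + 1) * v - convNum v (k + 1)| < (convDen v (k + 2) : ℝ)⁻¹ := by
  set x := gaussIter v (k + 1)
  set D : ℝ := convDen v (k + 1) * x + convDen v k
  have hq : (1 : ℝ) ≤ convDen v (k + 1) := by
    exact_mod_cast one_le_convDen_succ hv k
  have hq' : (1 : ℝ) ≤ convDen v (k + 2) := by
    exact_mod_cast one_le_convDen_succ hv (k + 1)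
  have hfloor : (⌊x⌋ : ℝ) < x :=
    (Int.floor_le x).lt_of_ne ((irrational_gaussIter hv _).ne_int _).symm
  have hD : (convDen v (k + 2) : ℝ) < D := by
    simp only [D, convDen]
    push_cast
    nlinarith
  have hdet : (convNum v (k + 1) * convDen v k - convNum v k * convDen v (k + 1) : ℝ) =
      (-1) ^ (k + 1) := by exact_mod_cast determinant_convNum_convDen v k
  have hprod : (convDen v (k + 1) * v - convNum v (k + 1)) * D = (-1) ^ k := by
    linear_combination (convDen v (k + 1) : ℝ) * mul_convDen_mul_gaussIter_add hv k - hdet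
  have habs : |convDen v (k + 1) * v - convNum v (k + 1)| = D⁻¹ := by
    refine eq_inv_of_mul_eq_one_left ?_
    rw [← abs_of_pos (by linarith : 0 < D), ← abs_mul, hprod]
    simp
  rw [habs]
  exact inv_strictAnti₀ (by linarith) hD

end Convergents

theorem exists_le_and_lt_succ {α : Type*} [LinearOrder α] {f : ℕ → α} {N : α}
    (h0 : f 0 ≤ N) (hf : ∃ k, N < f k) : ∃ k, f k ≤ N ∧ N < f (k + 1) := by
  by_contra! h
  have hle : ∀ k, f k ≤ N := by
    intro k
    induction k with
    | zero => exact h0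
    | succ k ih => exact h k ih
  obtain ⟨k, hk⟩ := hf
  exact (hle k).not_gt hk

theorem exists_abs_mul_sub_add_le_of_isCoprime {p q : ℤ} (hpq : IsCoprime p q) (hq : 0 < q)
    (v β : ℝ) :
    ∃ n m : ℤ, 0 ≤ n ∧ n < q ∧ |n * v - m + β| ≤ (2 * q : ℝ)⁻¹ + |q * v - p| := by
  obtain ⟨u, w, huw⟩ := hpq
  set e := round ((q : ℝ) * β)
  -- `n ≡ -e p⁻¹ (mod q)`, so that `n p + e = q m` and
  -- `q (n v - m + β) = (q β - e) + n (q v - p)`.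
  set n := (-e * u) % q
  set m := e * w - (-e * u) / q * p
  have hn : n * p = -e + q * m := by
    linear_combination p * Int.emod_def (-e * u) q - e * huw
  have hn0 : 0 ≤ n := Int.emod_nonneg _ hq.ne'
  have hnq : n < q := Int.emod_lt_of_pos _ hq
  refine ⟨n, m, hn0, hnq, ?_⟩
  have hqR : (0 : ℝ) < q := by exact_mod_cast hq
  have hnR : (0 : ℝ) ≤ n := by exact_mod_cast hn0
  have hnqR : (n : ℝ) ≤ q := by exact_mod_cast hnq.le
  have hnR' : (n * p : ℝ) = -e + q * m := by exact_mod_cast hn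
  have key : (n * v - m + β) * q = (q * β - e) + n * (q * v - p) := by
    linear_combination hnR'
  calc |n * v - m + β| = |(q * β - e) + n * (q * v - p)| / q := by
        rw [← key, abs_mul, abs_of_pos hqR, mul_div_cancel_right₀ _ hqR.ne']
    _ ≤ (1 / 2 + q * |q * v - p|) / q := by
        gcongr
        refine (abs_add_le _ _).trans (add_le_add (abs_sub_round _) ?_)
        rw [abs_mul, abs_of_nonneg hnR]
        gcongr
    _ = (2 * q : ℝ)⁻¹ + |q * v - p| := by field_simp

theorem exists_abs_mul_sub_add_le_of_floor_gaussIter_le {v : ℝ} (hv : Irrational v) {M : ℤ}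
    (hM : ∀ k : ℕ, 1 ≤ k → ⌊gaussIter v k⌋ ≤ M) (β : ℝ) {N : ℤ} (hN : 1 ≤ N) :
    ∃ n m : ℤ, 0 ≤ n ∧ n ≤ N ∧ |n * v - m + β| ≤ (M + 2) / (N + 1) := by
  obtain ⟨k, hkN, hNk⟩ : ∃ k, convDen v (k + 1) ≤ N ∧ N < convDen v (k + 2) := by
    refine exists_le_and_lt_succ (f := fun k => convDen v (k + 1)) hN ⟨N.toNat + 1, ?_⟩
    have := le_convDen_succ hv (N.toNat + 1)
    push_cast at this
    omega
  have hq : 1 ≤ convDen v (k + 1) := one_le_convDen_succ hv k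
  obtain ⟨n, m, hn0, hnq, hnm⟩ :=
    exists_abs_mul_sub_add_le_of_isCoprime (isCoprime_convNum_convDen v k) hq v β
  refine ⟨n, m, hn0, by omega, hnm.trans ?_⟩
  have hq' := convDen_succ_succ_le hv (hM (k + 1) (by omega))
  have hM1 : 0 < M + 1 := by nlinarith
  have hqR : (1 : ℝ) ≤ convDen v (k + 1) := by exact_mod_cast hq
  have hq'R : (convDen v (k + 2) : ℝ) ≤ (M + 1) * convDen v (k + 1) := by exact_mod_cast hq'
  have hNR : (N : ℝ) + 1 ≤ convDen v (k + 2) := by exact_mod_cast hNk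
  have hN1 : (1 : ℝ) ≤ N := by exact_mod_cast hN
  have hM1R : (0 : ℝ) < M + 1 := by exact_mod_cast hM1
  calc (2 * convDen v (k + 1) : ℝ)⁻¹ + |convDen v (k + 1) * v - convNum v (k + 1)|
      ≤ (M + 1) / (2 * (N + 1)) + (N + 1 : ℝ)⁻¹ := by
        gcongr
        · rw [inv_eq_one_div, div_le_div_iff₀ (by positivity) (by positivity)]
          nlinarith
        · exact (abs_convDen_mul_sub_convNum_lt hv k).le.trans (inv_anti₀ (by positivity) hNR)
    _ = (M + 3) / 2 / (N + 1) := by field_simp; ring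
    _ ≤ (M + 2) / (N + 1) := by gcongr; linarith

theorem exists_int_one_le_mul_succ_le_le_two_mul {b Q : ℝ} (hb : 0 < b) (hQ : 2 * b ≤ Q) :
    ∃ N : ℤ, 1 ≤ N ∧ b * (N + 1) ≤ Q ∧ Q ≤ 2 * b * (N + 1) := by
  have h2 : (2 : ℤ) ≤ ⌊Q / b⌋ :=
    Int.le_floor.mpr (by rw [le_div_iff₀ hb]; push_cast; linarith)
  have h2R : (2 : ℝ) ≤ ⌊Q / b⌋ := by exact_mod_cast h2
  have hlo := (le_div_iff₀ hb).mp (Int.floor_le (Q / b))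
  have hhi := (div_lt_iff₀ hb).mp (Int.lt_floor_add_one (Q / b))
  refine ⟨⌊Q / b⌋ - 1, by omega, ?_, ?_⟩ <;> push_cast <;> nlinarith

theorem inhomogeneous_uniform_approx_bad_general
    (ξ α : ℝ) (hξ : Irrational ξ) (a b r s : ℤ)
    (ha : 1 ≤ a) (hb : 1 ≤ b)
    (hs0 : 0 ≤ s) (hsb : s ≤ b - 1)
    (M : ℤ) (hM : ∀ k : ℕ, 1 ≤ k → ⌊gaussIter ((b : ℝ) * ξ / (a : ℝ)) k⌋ ≤ M) :
    ∀ Q : ℝ, 2 * (b : ℝ) ≤ Q → ∃ m n : ℤ,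
      0 ≤ b * n + s ∧ ((b * n + s : ℤ) : ℝ) ≤ Q ∧
      |((b * n + s : ℤ) : ℝ) * ξ - ((a * m + r : ℤ) : ℝ) + α| ≤
        2 * (a : ℝ) * (b : ℝ) * ((M : ℝ) + 2) / Q := by
  intro Q hQ
  have hv : Irrational ((b : ℝ) * ξ / a) := (hξ.intCast_mul (by omega)).div_intCast (by omega)
  have haR : (0 : ℝ) < a := by exact_mod_cast ha
  have hbR : (0 : ℝ) < b := by exact_mod_cast hb
  obtain ⟨N, hN, hNQ, hQN⟩ := exists_int_one_le_mul_succ_le_le_two_mul hbR hQ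
  obtain ⟨n, m, hn0, hnN, hnm⟩ :=
    exists_abs_mul_sub_add_le_of_floor_gaussIter_le hv hM ((s * ξ - r + α) / a) hN
  have hM2 : (0 : ℤ) ≤ M + 2 := by
    linarith [(one_le_floor_gaussIter_succ hv 0).trans (hM 1 le_rfl)]
  have hsR : (s : ℝ) ≤ b - 1 := by exact_mod_cast hsb
  have hnR : (n : ℝ) ≤ N := by exact_mod_cast hnN
  refine ⟨m, n, by nlinarith, by push_cast; nlinarith, ?_⟩
  have hsubst : ((b * n + s : ℤ) : ℝ) * ξ - ((a * m + r : ℤ) : ℝ) + α =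
      a * (n * (b * ξ / a) - m + (s * ξ - r + α) / a) := by
    push_cast
    field_simp
    ring
  rw [hsubst, abs_mul, abs_of_pos haR]
  calc a * |n * (b * ξ / a) - m + (s * ξ - r + α) / a|
      ≤ a * ((M + 2) / (N + 1)) := by gcongr
    _ = 2 * a * b * (M + 2) / (2 * b * (N + 1)) := by field_simp
    _ ≤ 2 * a * b * (M + 2) / Q :=
        div_le_div_of_nonneg_left (mul_nonneg (by positivity) (by exact_mod_cast hM2))
          (by linarith) hQN

/-- For a badly approximable irrational ξ (partial quotients of bξ/a
bounded by M), integers a, b ≥ 1, 0 ≤ r < a, 0 ≤ s < b and α ∈ ℝ, for every real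
Q ≥ 2b there exist integers m, n with 0 ≤ bn+s ≤ Q and
|(bn+s)ξ − (am+r) + α| ≤ 2ab(M+2)/Q. -/
theorem inhomogeneous_uniform_approx_bad
    (ξ α : ℝ) (hξ : Irrational ξ) (a b r s : ℤ)
    (ha : 1 ≤ a) (hb : 1 ≤ b) (hr0 : 0 ≤ r) (hra : r ≤ a - 1)
    (hs0 : 0 ≤ s) (hsb : s ≤ b - 1)
    (M : ℤ) (hM : ∀ k : ℕ, 1 ≤ k → ⌊gaussIter ((b : ℝ) * ξ / (a : ℝ)) k⌋ ≤ M) :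
    ∀ Q : ℝ, 2 * (b : ℝ) ≤ Q → ∃ m n : ℤ,
      0 ≤ b * n + s ∧ ((b * n + s : ℤ) : ℝ) ≤ Q ∧
      |((b * n + s : ℤ) : ℝ) * ξ - ((a * m + r : ℤ) : ℝ) + α| ≤
        2 * (a : ℝ) * (b : ℝ) * ((M : ℝ) + 2) / Q :=
  inhomogeneous_uniform_approx_bad_general ξ α hξ a b r s ha hb hs0 hsb M hM
end

section
/- Let ξ be irrational and Q ≥ 1 an integer. Then the points 0, {ξ}, {2ξ}, …, {Qξ} partition [0,1] into Q+1 subintervals whose lengths take at most three distinct values, and writing Q = p·q_{k−1} + q_{k−2} + w with 1 ≤ p ≤ a_k and 0 ≤ w < q_{k−1}, exactly Q+1−q_{k−1} intervals have length η_{k−1}, exactly w+1 have length η_{k−2} − p·η_{k−1}, and exactly q_{k−1} − (w+1) have length η_{k−2} − (p−1)·η_{k−1}. -/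
/-!
Order the points `{j ξ}`, `0 ≤ j ≤ Q`, around `ℝ / ℤ` and write `q₁ = q_{k-1}`,
`R = p q_{k-1} + q_{k-2}`. Modulo `1`, `q₁ ξ ≡ ε η_{k-1}` and `-R ξ ≡ ε (η_{k-2} - p η_{k-1})`
with `ε = (-1)^{k-1}`, so for even `k - 1` the point `{j ξ}` is followed by `{(j + q₁) ξ}`,
`{(j - R) ξ}` or `{(j + q₁ - R) ξ}`, whichever index lies in `[0, Q]`, at distance `η_{k-1}`,
`η_{k-2} - p η_{k-1}` or their sum (for odd `k - 1` mirror this under `j ↦ Q - j`). These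
distances are positive and add up to `q_{k-1} η_{k-2} + q_{k-2} η_{k-1} = 1`.

An injective successor map with positive gaps of total length `1` is a single cycle: a shorter
cycle would close up after a total length in `(0, 1)` which is also an integer. Following it from
`0` therefore lists the points from left to right, and the gap lengths are counted by the three
cases above.
-/

open scoped Classical

noncomputable def etaCF (ξ : ℝ) (p q : ℤ → ℤ) (k : ℤ) : ℝ :=
  (-1 : ℝ) ^ k * ((q k : ℝ) * ξ - (p k : ℝ))

open Finset Function

/-- `exists_sorted` shows that such a `σ` is the successor map of the points `{j θ}`, `j ≤ N`. -/
structure IsNextPointMap (N : ℕ) (θ : ℝ) (σ : ℕ → ℕ) (g : ℕ → ℝ) : Prop where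
  mapsTo : Set.MapsTo σ (range (N + 1)) (range (N + 1))
  injOn : Set.InjOn σ (range (N + 1))
  gap_pos : ∀ j ∈ range (N + 1), 0 < g j
  sum_gap : ∑ j ∈ range (N + 1), g j = 1
  step : ∀ j ∈ range (N + 1), ∃ m : ℤ, (σ j : ℝ) * θ = j * θ + g j + m

lemma Set.InjOn.injOn_iterate_of_not_isPeriodicPt {α : Type*} {f : α → α} {s : Set α}
    (hinj : Set.InjOn f s) (hmaps : Set.MapsTo f s s) {x : α} (hx : x ∈ s) {n : ℕ}
    (hret : ∀ e, 0 < e → e < n → ¬IsPeriodicPt f e x) : Set.InjOn (f^[·] x) (Finset.range n) := by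
  have key : ∀ a b, a < b → b < n → f^[a] x ≠ f^[b] x := by
    intro a b hab hbn heq
    rw [show b = a + (b - a) by omega, iterate_add_apply] at heq
    exact hret (b - a) (by omega) (by omega) <|
      ((hinj.iterate hmaps a) hx (hmaps.iterate _ hx) heq).symm
  intro a ha b hb heq
  simp only [coe_range, Set.mem_Iio] at ha hb
  rcases lt_trichotomy a b with h | h | h
  · exact absurd heq (key a b h hb)
  · exact h
  · exact absurd heq.symm (key b a h ha)

namespace IsNextPointMap

variable {N : ℕ} {θ : ℝ} {σ : ℕ → ℕ} {g : ℕ → ℝ}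

lemma iterate_mem (h : IsNextPointMap N θ σ g) (i : ℕ) : σ^[i] 0 ∈ range (N + 1) :=
  h.mapsTo.iterate i (by simp)

lemma exists_int_iterate (h : IsNextPointMap N θ σ g) (i : ℕ) :
    ∃ m : ℤ, (σ^[i] 0 : ℝ) * θ = ∑ t ∈ range i, g (σ^[t] 0) + m := by
  induction i with
  | zero => exact ⟨0, by simp⟩
  | succ i ih =>
    obtain ⟨m, hm⟩ := ih
    obtain ⟨m', hm'⟩ := h.step _ (h.iterate_mem i)
    refine ⟨m + m', ?_⟩
    rw [iterate_succ_apply', hm', hm, sum_range_succ]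
    push_cast
    ring

/-- A return to `0` after `d ≤ N` steps would make the gaps along the orbit, a proper subfamily
of all gaps, sum to an integer in `(0, 1)`. -/
lemma iterate_ne_zero (h : IsNextPointMap N θ σ g) {d : ℕ} (hd : 0 < d) (hdN : d ≤ N) :
    σ^[d] 0 ≠ 0 := by
  intro hret
  have hex : ∃ d, 0 < d ∧ d ≤ N ∧ σ^[d] 0 = 0 := ⟨d, hd, hdN, hret⟩
  obtain ⟨hd₀, hdN₀, hret₀⟩ := Nat.find_spec hex
  set d₀ := Nat.find hex
  have hinj : Set.InjOn (σ^[·] 0) (range d₀) :=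
    h.injOn.injOn_iterate_of_not_isPeriodicPt h.mapsTo (by simp) fun e he hed hz =>
      Nat.find_min hex hed ⟨he, by omega, hz⟩
  have hlt : ∑ t ∈ range d₀, g (σ^[t] 0) < 1 := by
    obtain ⟨v, hv, hvS⟩ := exists_mem_notMem_of_card_lt_card (s := (range d₀).image (σ^[·] 0))
      (t := range (N + 1)) ((card_image_le).trans_lt (by simp; omega))
    rw [← sum_image hinj, ← h.sum_gap]
    refine sum_lt_sum_of_subset ?_ hv hvS (h.gap_pos v hv) fun j hj _ => (h.gap_pos j hj).le
    intro u hu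
    obtain ⟨t, -, rfl⟩ := mem_image.mp hu
    exact h.iterate_mem t
  have hpos : 0 < ∑ t ∈ range d₀, g (σ^[t] 0) :=
    sum_pos (fun t _ => h.gap_pos _ (h.iterate_mem t)) (nonempty_range_iff.mpr (by omega))
  obtain ⟨m, hm⟩ := h.exists_int_iterate d₀
  rw [hret₀, Nat.cast_zero, zero_mul] at hm
  have h1 : (0 : ℝ) < -m := by linarith
  have h2 : (-m : ℝ) < 1 := by linarith
  norm_cast at h1 h2
  omega

lemma injOn_iterate (h : IsNextPointMap N θ σ g) : Set.InjOn (σ^[·] 0) (range (N + 1)) :=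
  h.injOn.injOn_iterate_of_not_isPeriodicPt h.mapsTo (by simp) fun _ he heN =>
    h.iterate_ne_zero he (by omega)

lemma image_iterate (h : IsNextPointMap N θ σ g) :
    (range (N + 1)).image (σ^[·] 0) = range (N + 1) :=
  eq_of_subset_of_card_le (fun _ hv => by
      obtain ⟨t, -, rfl⟩ := mem_image.mp hv
      exact h.iterate_mem t)
    (card_image_of_injOn h.injOn_iterate).ge

/-- The `i`-th point from the left is reached after `i` steps of `σ` from `0`, so it sits at the
`i`-th partial sum of the gaps along the orbit. -/
theorem exists_sorted (h : IsNextPointMap N θ σ g) :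
    ∃ y : ℕ → ℝ, StrictMono y ∧ y 0 = 0 ∧ y (N + 1) = 1 ∧
      (∀ i ≤ N, ∃ j ≤ N, y i = Int.fract ((j : ℝ) * θ)) ∧
      (∀ j ≤ N, ∃ i ≤ N, Int.fract ((j : ℝ) * θ) = y i) ∧
      ∀ v : ℝ, #{i ∈ range (N + 1) | y (i + 1) - y i = v} = #{j ∈ range (N + 1) | g j = v} := by
  set y : ℕ → ℝ := fun i => ∑ t ∈ range i, g (σ^[t] 0)
  have hgap : ∀ i, y (i + 1) - y i = g (σ^[i] 0) := fun i => by
    simp only [y, sum_range_succ, add_sub_cancel_left]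
  have hmono : StrictMono y := strictMono_nat_of_lt_succ fun i => by
    linarith [hgap i, h.gap_pos _ (h.iterate_mem i)]
  have hy0 : y 0 = 0 := sum_range_zero _
  have hy1 : y (N + 1) = 1 := by
    simp only [y]
    rw [← sum_image h.injOn_iterate, h.image_iterate, h.sum_gap]
  have hfract : ∀ i ≤ N, Int.fract ((σ^[i] 0 : ℕ) * θ) = y i := by
    intro i hi
    obtain ⟨m, hm⟩ := h.exists_int_iterate i
    rw [hm, Int.fract_add_intCast, Int.fract_eq_self]
    exact ⟨hy0 ▸ hmono.monotone (Nat.zero_le i), hy1 ▸ hmono (by omega)⟩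
  have hsurj : ∀ j ≤ N, ∃ i ≤ N, σ^[i] 0 = j := by
    intro j hj
    have : j ∈ (range (N + 1)).image (σ^[·] 0) := by
      rw [h.image_iterate]; exact mem_range.mpr (by omega)
    obtain ⟨i, hi, rfl⟩ := mem_image.mp this
    exact ⟨i, by simpa [Nat.lt_succ_iff] using hi, rfl⟩
  refine ⟨y, hmono, hy0, hy1, fun i hi => ⟨_, ?_, (hfract i hi).symm⟩, fun j hj => ?_, fun v => ?_⟩
  · exact Nat.lt_succ_iff.mp (mem_range.mp (h.iterate_mem i))
  · obtain ⟨i, hi, rfl⟩ := hsurj j hj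
    exact ⟨i, hi, hfract i hi⟩
  · simp only [hgap]
    conv_rhs => rw [← h.image_iterate, filter_image, card_image_of_injOn
      (h.injOn_iterate.mono (coe_subset.mpr (filter_subset _ _)))]

/-- The configuration of the `{j θ}` is that of the `{-j θ}` under `j ↦ N - j`,
`x ↦ N θ - x`. -/
lemma reflect (h : IsNextPointMap N (-θ) σ g) :
    IsNextPointMap N θ (fun j => N - σ (N - j)) (fun j => g (N - j)) where
  mapsTo j _ := by simp only [coe_range, Set.mem_Iio]; omega
  injOn j hj j' hj' heq := by
    simp only [coe_range, Set.mem_Iio] at hj hj' heq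
    have hmem : ∀ i, N - i ∈ (range (N + 1) : Set ℕ) := fun i => by simp
    have hσ := h.mapsTo (hmem j)
    have hσ' := h.mapsTo (hmem j')
    simp only [coe_range, Set.mem_Iio] at hσ hσ'
    have := h.injOn (hmem j) (hmem j') (by omega)
    omega
  gap_pos j hj := h.gap_pos _ (by simp)
  sum_gap := by
    rw [← h.sum_gap]
    simpa using sum_range_reflect g (N + 1)
  step j hj := by
    have hj' : N - j ∈ range (N + 1) := by simp
    have hσ := h.mapsTo hj'
    simp only [coe_range, Set.mem_Iio, mem_range] at hσ hj
    obtain ⟨m, hm⟩ := h.step _ hj'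
    rw [Nat.cast_sub (by omega)] at hm
    exact ⟨m, by rw [Nat.cast_sub (by omega)]; linear_combination hm⟩

end IsNextPointMap

lemma card_filter_range_reflect (N : ℕ) (P : ℕ → Prop) [DecidablePred P] :
    #{j ∈ range (N + 1) | P (N - j)} = #{j ∈ range (N + 1) | P j} := by
  have := sum_range_reflect (fun j => if P j then 1 else 0) (N + 1)
  rw [Nat.add_sub_cancel] at this
  rw [card_filter, card_filter, ← this]

/-- Among the points `{j θ}`, `0 ≤ j ≤ Q`, with `q₁ θ ≡ L₁` and `-R θ ≡ L₂ (mod 1)`, the point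
`{j θ}` is followed by `{(j + q₁) θ}` at distance `L₁` if `j + q₁ ≤ Q`, by `{(j - R) θ}` at
distance `L₂` if `R ≤ j`, and by `{(j + q₁ - R) θ}` at distance `L₁ + L₂` otherwise. -/
def threeGapNext (Q q₁ R j : ℕ) : ℕ :=
  j + (if j < R then q₁ else 0) - (if Q < j + q₁ then R else 0)

def threeGapLength (Q q₁ R : ℕ) (L₁ L₂ : ℝ) (j : ℕ) : ℝ :=
  (if j < R then L₁ else 0) + (if Q < j + q₁ then L₂ else 0)

section ThreeGap

variable {Q q₁ R : ℕ} {θ L₁ L₂ : ℝ}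

lemma sum_threeGapLength (hq₁ : q₁ ≤ R) (hRQ : R ≤ Q) :
    ∑ j ∈ range (Q + 1), threeGapLength Q q₁ R L₁ L₂ j = R * L₁ + q₁ * L₂ := by
  have hR : {j ∈ range (Q + 1) | j < R} = range R := by ext; simp; omega
  have hq : {j ∈ range (Q + 1) | Q < j + q₁} = Ico (Q + 1 - q₁) (Q + 1) := by ext; simp; omega
  simp only [threeGapLength, sum_add_distrib, ← sum_filter, sum_const, hR, hq, card_range,
    Nat.card_Ico, nsmul_eq_mul]
  rw [Nat.sub_sub_self (by omega)]

lemma isNextPointMap_threeGap (hq₁ : q₁ ≤ R) (hRQ : R ≤ Q) (hQ : Q < R + q₁)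
    (hL₁ : 0 < L₁) (hL₂ : 0 < L₂) (hsum : R * L₁ + q₁ * L₂ = 1)
    (h₁ : ∃ m : ℤ, q₁ * θ = L₁ + m) (h₂ : ∃ m : ℤ, -(R * θ) = L₂ + m) :
    IsNextPointMap Q θ (threeGapNext Q q₁ R) (threeGapLength Q q₁ R L₁ L₂) where
  mapsTo j hj := by
    simp only [coe_range, Set.mem_Iio, threeGapNext] at hj ⊢
    split_ifs <;> omega
  injOn j hj j' hj' heq := by
    simp only [coe_range, Set.mem_Iio, threeGapNext] at hj hj' heq
    split_ifs at heq <;> omega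
  gap_pos j hj := by
    simp only [mem_range, threeGapLength] at hj ⊢
    split_ifs <;> linarith
  sum_gap := by rw [sum_threeGapLength hq₁ hRQ, hsum]
  step j hj := by
    obtain ⟨m₁, hm₁⟩ := h₁
    obtain ⟨m₂, hm₂⟩ := h₂
    simp only [mem_range] at hj
    simp only [threeGapNext, threeGapLength]
    split_ifs with hR hq
    · exact ⟨m₁ + m₂, by rw [Nat.cast_sub (by omega)]; push_cast; linear_combination hm₁ + hm₂⟩
    · exact ⟨m₁, by rw [Nat.sub_zero]; push_cast; linear_combination hm₁⟩
    · exact ⟨m₂, by rw [Nat.cast_sub (by omega)]; push_cast; linear_combination hm₂⟩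
    · omega

lemma threeGapLength_eq_ite (hQ : Q < R + q₁) (j : ℕ) :
    threeGapLength Q q₁ R L₁ L₂ j =
      if j + q₁ ≤ Q then L₁ else if R ≤ j then L₂ else L₁ + L₂ := by
  unfold threeGapLength
  split_ifs <;> first | omega | simp

lemma card_threeGapLength_eq_left (hQ : Q < R + q₁) (hL₂ : 0 < L₂) (hne : L₁ ≠ L₂) :
    #{j ∈ range (Q + 1) | threeGapLength Q q₁ R L₁ L₂ j = L₁} = Q + 1 - q₁ := by
  rw [← card_range (Q + 1 - q₁)]
  congr 1
  ext j
  simp only [mem_filter, mem_range, threeGapLength_eq_ite hQ]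
  split_ifs <;> simp [hne.symm, hL₂.ne'] <;> omega

lemma card_threeGapLength_eq_right (hQ : Q < R + q₁) (hL₁ : 0 < L₁) (hne : L₁ ≠ L₂) :
    #{j ∈ range (Q + 1) | threeGapLength Q q₁ R L₁ L₂ j = L₂} = Q + 1 - R := by
  rw [← Nat.card_Ico R (Q + 1)]
  congr 1
  ext j
  simp only [mem_filter, mem_range, mem_Ico, threeGapLength_eq_ite hQ]
  split_ifs <;> simp [hne, hL₁.ne'] <;> omega

lemma card_threeGapLength_eq_add (hq₁ : q₁ ≤ R) (hRQ : R ≤ Q) (hQ : Q < R + q₁)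
    (hL₁ : 0 < L₁) (hL₂ : 0 < L₂) :
    #{j ∈ range (Q + 1) | threeGapLength Q q₁ R L₁ L₂ j = L₁ + L₂} = R + q₁ - (Q + 1) := by
  rw [show R + q₁ - (Q + 1) = R - (Q + 1 - q₁) by omega, ← Nat.card_Ico]
  congr 1
  ext j
  simp only [mem_filter, mem_range, mem_Ico, threeGapLength_eq_ite hQ]
  split_ifs <;> simp [hL₁.ne', hL₂.ne'] <;> omega

theorem exists_sorted_threeGap {ξ θ : ℝ} (hθ : θ = ξ ∨ θ = -ξ) (hq₁ : q₁ ≤ R) (hRQ : R ≤ Q)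
    (hQ : Q < R + q₁) (hL₁ : 0 < L₁) (hL₂ : 0 < L₂) (hsum : R * L₁ + q₁ * L₂ = 1)
    (h₁ : ∃ m : ℤ, q₁ * θ = L₁ + m) (h₂ : ∃ m : ℤ, -(R * θ) = L₂ + m) :
    ∃ y : ℕ → ℝ, StrictMono y ∧ y 0 = 0 ∧ y (Q + 1) = 1 ∧
      (∀ i ≤ Q, ∃ j ≤ Q, y i = Int.fract ((j : ℝ) * ξ)) ∧
      (∀ j ≤ Q, ∃ i ≤ Q, Int.fract ((j : ℝ) * ξ) = y i) ∧
      ∀ v : ℝ, #{i ∈ range (Q + 1) | y (i + 1) - y i = v} =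
        #{j ∈ range (Q + 1) | threeGapLength Q q₁ R L₁ L₂ j = v} := by
  have hG := isNextPointMap_threeGap hq₁ hRQ hQ hL₁ hL₂ hsum h₁ h₂
  obtain ⟨σ, g, hσg, hcard⟩ : ∃ σ g, IsNextPointMap Q ξ σ g ∧ ∀ v : ℝ,
      #{j ∈ range (Q + 1) | g j = v} =
        #{j ∈ range (Q + 1) | threeGapLength Q q₁ R L₁ L₂ j = v} := by
    rcases hθ with rfl | rfl
    · exact ⟨_, _, hG, fun _ => rfl⟩
    · exact ⟨_, _, hG.reflect, fun v =>
        card_filter_range_reflect Q (threeGapLength Q q₁ R L₁ L₂ · = v)⟩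
  obtain ⟨y, hy, hy0, hy1, hpts, hpts', hgaps⟩ := hσg.exists_sorted
  exact ⟨y, hy, hy0, hy1, hpts, hpts', fun v => (hgaps v).trans (hcard v)⟩

end ThreeGap

theorem exists_three_gap_of_int {ξ θ η₁ η₂ : ℝ} {Q : ℕ} {P q₁ q₂ W : ℤ}
    (hθ : θ = ξ ∨ θ = -ξ) (hQ : (Q : ℤ) = P * q₁ + q₂ + W) (hP : 1 ≤ P) (hq₂ : 0 ≤ q₂)
    (hW : 0 ≤ W) (hWq : W < q₁) (hη₁ : 0 < η₁) (hL₂ : 0 < η₂ - P * η₁)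
    (hne : η₁ ≠ η₂ - P * η₁) (hsum : q₁ * η₂ + q₂ * η₁ = 1)
    (h₁ : ∃ m : ℤ, q₁ * θ = η₁ + m) (h₂ : ∃ m : ℤ, q₂ * θ = -η₂ + m) :
    ∃ y : ℕ → ℝ, StrictMono y ∧ y 0 = 0 ∧ y (Q + 1) = 1 ∧
      (∀ i ≤ Q, ∃ j ≤ Q, y i = Int.fract ((j : ℝ) * ξ)) ∧
      (∀ j ≤ Q, ∃ i ≤ Q, Int.fract ((j : ℝ) * ξ) = y i) ∧
      (#{i ∈ range (Q + 1) | y (i + 1) - y i = η₁} : ℤ) = Q + 1 - q₁ ∧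
      (#{i ∈ range (Q + 1) | y (i + 1) - y i = η₂ - P * η₁} : ℤ) = W + 1 ∧
      (#{i ∈ range (Q + 1) | y (i + 1) - y i = η₂ - (P - 1) * η₁} : ℤ) = q₁ - (W + 1) := by
  lift P to ℕ using (by omega)
  lift q₁ to ℕ using (by omega)
  lift q₂ to ℕ using hq₂
  lift W to ℕ using hW
  push_cast at *
  obtain ⟨m₁, hm₁⟩ := h₁
  obtain ⟨m₂, hm₂⟩ := h₂
  have hq₁R : q₁ ≤ P * q₁ + q₂ := Nat.le_add_right_of_le (Nat.le_mul_of_pos_left _ (by omega))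
  have hRQ : P * q₁ + q₂ ≤ Q := by omega
  have hQR : Q < P * q₁ + q₂ + q₁ := by omega
  have hR : ∃ m : ℤ, -(((P * q₁ + q₂ : ℕ) : ℝ) * θ) = η₂ - P * η₁ + m :=
    ⟨-(P * m₁) - m₂, by push_cast; linear_combination -(P : ℝ) * hm₁ - hm₂⟩
  obtain ⟨y, hy, hy0, hy1, hpts, hpts', hgaps⟩ := exists_sorted_threeGap hθ hq₁R hRQ hQR
    hη₁ hL₂ (by push_cast; linear_combination hsum) ⟨m₁, hm₁⟩ hR
  refine ⟨y, hy, hy0, hy1, hpts, hpts', ?_, ?_, ?_⟩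
  · rw [hgaps, card_threeGapLength_eq_left hQR hL₂ hne]
    omega
  · rw [hgaps, card_threeGapLength_eq_right hQR hη₁ hne]
    omega
  · rw [show η₂ - (P - 1) * η₁ = η₁ + (η₂ - P * η₁) by ring, hgaps,
      card_threeGapLength_eq_add hq₁R hRQ hQR hη₁ hL₂]
    omega

/-- `x n` are the complete quotients of `ξ`, `a n` its partial quotients and `p k / q k` its
convergents. -/
structure IsContinuedFractionExpansion (ξ : ℝ) (x : ℕ → ℝ) (a p q : ℤ → ℤ) : Prop where
  x_zero : x 0 = ξ
  x_succ : ∀ n : ℕ, x (n + 1) = 1 / (x n - ⌊x n⌋)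
  a_eq : ∀ n : ℕ, a n = ⌊x n⌋
  p_neg_one : p (-1) = 1
  q_neg_one : q (-1) = 0
  p_zero : p 0 = a 0
  q_zero : q 0 = 1
  p_rec : ∀ k : ℤ, 1 ≤ k → p k = a k * p (k - 1) + p (k - 2)
  q_rec : ∀ k : ℤ, 1 ≤ k → q k = a k * q (k - 1) + q (k - 2)

section CompleteQuotient

variable {ξ : ℝ} {x : ℕ → ℝ}

lemma irrational_completeQuotient (hξ : Irrational ξ) (hx0 : x 0 = ξ)
    (hxr : ∀ n : ℕ, x (n + 1) = 1 / (x n - ⌊x n⌋)) (n : ℕ) : Irrational (x n) := by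
  induction n with
  | zero => rwa [hx0]
  | succ n ih => rw [hxr n, one_div]; exact (ih.sub_intCast _).inv

lemma fract_completeQuotient_pos (hξ : Irrational ξ) (hx0 : x 0 = ξ)
    (hxr : ∀ n : ℕ, x (n + 1) = 1 / (x n - ⌊x n⌋)) (n : ℕ) : 0 < Int.fract (x n) :=
  Int.fract_pos.mpr ((irrational_completeQuotient hξ hx0 hxr n).ne_int _)

lemma one_lt_completeQuotient_succ (hξ : Irrational ξ) (hx0 : x 0 = ξ)
    (hxr : ∀ n : ℕ, x (n + 1) = 1 / (x n - ⌊x n⌋)) (n : ℕ) : 1 < x (n + 1) := by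
  rw [hxr n]
  exact one_lt_one_div (fract_completeQuotient_pos hξ hx0 hxr n) (Int.fract_lt_one _)

lemma completeQuotient_succ_mul_fract (hξ : Irrational ξ) (hx0 : x 0 = ξ)
    (hxr : ∀ n : ℕ, x (n + 1) = 1 / (x n - ⌊x n⌋)) (n : ℕ) : x (n + 1) * Int.fract (x n) = 1 := by
  rw [hxr n]
  exact one_div_mul_cancel (fract_completeQuotient_pos hξ hx0 hxr n).ne'

end CompleteQuotient

section Eta

variable {ξ : ℝ} {a p q : ℤ → ℤ}

lemma neg_one_zpow_sub_one (j : ℤ) : (-1 : ℝ) ^ (j - 1) = -(-1) ^ j := by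
  rw [zpow_sub_one₀ (by norm_num), inv_neg_one, mul_neg_one]

lemma etaCF_sub_two (hpr : ∀ k : ℤ, 1 ≤ k → p k = a k * p (k - 1) + p (k - 2))
    (hqr : ∀ k : ℤ, 1 ≤ k → q k = a k * q (k - 1) + q (k - 2)) {k : ℤ} (hk : 1 ≤ k) :
    etaCF ξ p q (k - 2) = a k * etaCF ξ p q (k - 1) + etaCF ξ p q k := by
  have hs := neg_one_zpow_sub_one (k - 1)
  rw [sub_sub, one_add_one_eq_two] at hs
  simp only [etaCF, hs, neg_one_zpow_sub_one k, hpr k hk, hqr k hk, Int.cast_add, Int.cast_mul]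
  ring

lemma exists_int_q_mul_neg_one_pow (n : ℕ) :
    (∃ m : ℤ, q n * ((-1) ^ n * ξ) = etaCF ξ p q n + m) ∧
      ∃ m : ℤ, q (n - 1) * ((-1) ^ n * ξ) = -etaCF ξ p q (n - 1) + m := by
  refine ⟨⟨(-1) ^ n * p n, ?_⟩, ⟨(-1) ^ n * p (n - 1), ?_⟩⟩
  · simp only [etaCF, zpow_natCast]; push_cast; ring
  · simp only [etaCF, neg_one_zpow_sub_one, zpow_natCast]; push_cast; ring

end Eta

namespace IsContinuedFractionExpansion

variable {ξ : ℝ} {x : ℕ → ℝ} {a p q : ℤ → ℤ}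

lemma etaCF_neg_one (h : IsContinuedFractionExpansion ξ x a p q) : etaCF ξ p q (-1) = 1 := by
  simp [etaCF, h.p_neg_one, h.q_neg_one]

lemma etaCF_zero (h : IsContinuedFractionExpansion ξ x a p q) :
    etaCF ξ p q 0 = Int.fract (x 0) := by
  have ha := h.a_eq 0
  rw [Nat.cast_zero] at ha
  simp only [etaCF, zpow_zero, one_mul, h.p_zero, h.q_zero, ha, Int.cast_one, h.x_zero]
  rfl

lemma etaCF_pred_eq_add (h : IsContinuedFractionExpansion ξ x a p q) (n : ℕ) :
    etaCF ξ p q (n - 1) = a (n + 1) * etaCF ξ p q n + etaCF ξ p q (n + 1) := by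
  have := etaCF_sub_two (ξ := ξ) h.p_rec h.q_rec (k := n + 1) (by omega)
  rwa [add_sub_cancel_right, show (n : ℤ) + 1 - 2 = n - 1 by ring] at this

/-- `η_{n+1} = η_{n-1} - a_{n+1} η_n = {x_{n+1}} η_n`, and `x_{n+2} = 1 / {x_{n+1}}`. -/
lemma etaCF_pred_eq_mul (hξ : Irrational ξ) (h : IsContinuedFractionExpansion ξ x a p q)
    (n : ℕ) : etaCF ξ p q (n - 1) = x (n + 1) * etaCF ξ p q n := by
  have hx := completeQuotient_succ_mul_fract hξ h.x_zero h.x_succ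
  induction n with
  | zero => simpa [h.etaCF_neg_one, h.etaCF_zero] using (hx 0).symm
  | succ n ih =>
    have ha : (a (n + 1) : ℝ) = x (n + 1) - Int.fract (x (n + 1)) := by
      rw [← Nat.cast_succ, h.a_eq, Int.self_sub_fract]
    have hrec := h.etaCF_pred_eq_add n
    push_cast
    rw [add_sub_cancel_right]
    linear_combination x (n + 1 + 1) * hrec - x (n + 1 + 1) * ih
      + x (n + 1 + 1) * etaCF ξ p q n * ha - etaCF ξ p q n * hx (n + 1)

lemma etaCF_pos (hξ : Irrational ξ) (h : IsContinuedFractionExpansion ξ x a p q) (n : ℕ) :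
    0 < etaCF ξ p q n := by
  have hx n := (zero_lt_one.trans (one_lt_completeQuotient_succ hξ h.x_zero h.x_succ n)).le
  induction n with
  | zero =>
    have := h.etaCF_pred_eq_mul hξ 0
    rw [Nat.cast_zero, zero_sub, h.etaCF_neg_one] at this
    exact pos_of_mul_pos_right (this ▸ zero_lt_one) (hx 0)
  | succ n ih =>
    have := h.etaCF_pred_eq_mul hξ (n + 1)
    rw [Nat.cast_succ, add_sub_cancel_right] at this
    exact pos_of_mul_pos_right (this ▸ ih) (hx (n + 1))

lemma etaCF_pred_sub_mul_pos (hξ : Irrational ξ) (h : IsContinuedFractionExpansion ξ x a p q)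
    {n : ℕ} {c : ℤ} (hc : c ≤ a (n + 1)) : 0 < etaCF ξ p q (n - 1) - c * etaCF ξ p q n := by
  have hcx : (c : ℝ) < x (n + 1) := by
    refine lt_of_le_of_ne ?_ ((irrational_completeQuotient hξ h.x_zero h.x_succ _).ne_int c).symm
    rw [← Int.le_floor, ← h.a_eq, Nat.cast_succ]
    exact hc
  rw [h.etaCF_pred_eq_mul hξ, ← sub_mul]
  exact mul_pos (sub_pos.mpr hcx) (h.etaCF_pos hξ n)

lemma etaCF_ne_pred_sub_mul (hξ : Irrational ξ) (h : IsContinuedFractionExpansion ξ x a p q)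
    (n : ℕ) (c : ℤ) : etaCF ξ p q n ≠ etaCF ξ p q (n - 1) - c * etaCF ξ p q n := by
  intro he
  rw [h.etaCF_pred_eq_mul hξ] at he
  have h0 : (x (n + 1) - (c + 1 : ℤ)) * etaCF ξ p q n = 0 := by
    push_cast; linear_combination -he
  exact (irrational_completeQuotient hξ h.x_zero h.x_succ _).ne_int (c + 1)
    (sub_eq_zero.mp ((mul_eq_zero.mp h0).resolve_right (h.etaCF_pos hξ n).ne'))

lemma q_pred_nonneg (hξ : Irrational ξ) (h : IsContinuedFractionExpansion ξ x a p q) (n : ℕ) :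
    0 ≤ q (n - 1) := by
  suffices ∀ n : ℕ, 0 ≤ q (n - 1) ∧ 0 ≤ q n from (this n).1
  intro n
  induction n with
  | zero => simp [h.q_neg_one, h.q_zero]
  | succ n ih =>
    have ha : 0 ≤ a (n + 1) := by
      rw [← Nat.cast_succ, h.a_eq, Int.floor_nonneg]
      exact (zero_lt_one.trans (one_lt_completeQuotient_succ hξ h.x_zero h.x_succ n)).le
    have hq := h.q_rec (n + 1) (by omega)
    rw [add_sub_cancel_right, show (n : ℤ) + 1 - 2 = n - 1 by ring] at hq
    push_cast
    rw [add_sub_cancel_right, hq]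
    exact ⟨ih.2, add_nonneg (mul_nonneg ha ih.2) ih.1⟩

lemma q_mul_etaCF_pred_add (h : IsContinuedFractionExpansion ξ x a p q) (n : ℕ) :
    q n * etaCF ξ p q (n - 1) + q (n - 1) * etaCF ξ p q n = 1 := by
  induction n with
  | zero => simp [h.etaCF_neg_one, h.q_zero, h.q_neg_one]
  | succ n ih =>
    have hq := h.q_rec (n + 1) (by omega)
    rw [add_sub_cancel_right, show (n : ℤ) + 1 - 2 = n - 1 by ring] at hq
    have hη := h.etaCF_pred_eq_add n
    push_cast
    rw [add_sub_cancel_right, hq]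
    push_cast
    linear_combination ih - q n * hη

end IsContinuedFractionExpansion

theorem three_distance_theorem_general
    (ξ : ℝ) (hξ : Irrational ξ) (x : ℕ → ℝ) (a p q : ℤ → ℤ)
    (hx0 : x 0 = ξ)
    (hxr : ∀ n : ℕ, x (n + 1) = 1 / (x n - ⌊x n⌋))
    (ha : ∀ n : ℕ, a (n : ℤ) = ⌊x n⌋)
    (hpm1 : p (-1) = 1) (hqm1 : q (-1) = 0) (hp0 : p 0 = a 0) (hq0 : q 0 = 1)
    (hpr : ∀ k : ℤ, 1 ≤ k → p k = a k * p (k - 1) + p (k - 2))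
    (hqr : ∀ k : ℤ, 1 ≤ k → q k = a k * q (k - 1) + q (k - 2))
    (Q : ℕ) (k pp w : ℤ) (hk : 1 ≤ k)
    (hdec : (Q : ℤ) = pp * q (k - 1) + q (k - 2) + w)
    (hpp1 : 1 ≤ pp) (hppa : pp ≤ a k) (hw0 : 0 ≤ w) (hwq : w < q (k - 1)) :
    ∃ y : ℕ → ℝ,
      (∀ i j : ℕ, i ≤ Q + 1 → j ≤ Q + 1 → i < j → y i < y j) ∧
      y 0 = 0 ∧ y (Q + 1) = 1 ∧
      (∀ i ≤ Q, ∃ j ≤ Q, y i = Int.fract ((j : ℝ) * ξ)) ∧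
      (∀ j ≤ Q, ∃ i ≤ Q, Int.fract ((j : ℝ) * ξ) = y i) ∧
      (((Finset.range (Q + 1)).filter
          (fun i => y (i + 1) - y i = etaCF ξ p q (k - 1))).card : ℤ)
        = (Q : ℤ) + 1 - q (k - 1) ∧
      (((Finset.range (Q + 1)).filter
          (fun i => y (i + 1) - y i =
            etaCF ξ p q (k - 2) - (pp : ℝ) * etaCF ξ p q (k - 1))).card : ℤ)
        = w + 1 ∧
      (((Finset.range (Q + 1)).filter
          (fun i => y (i + 1) - y i =
            etaCF ξ p q (k - 2) - ((pp : ℝ) - 1) * etaCF ξ p q (k - 1))).card : ℤ)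
        = q (k - 1) - (w + 1) := by
  have h : IsContinuedFractionExpansion ξ x a p q := ⟨hx0, hxr, ha, hpm1, hqm1, hp0, hq0, hpr, hqr⟩
  obtain ⟨n, rfl⟩ : ∃ n : ℕ, k = n + 1 := ⟨(k - 1).toNat, by omega⟩
  rw [add_sub_cancel_right, show (n : ℤ) + 1 - 2 = n - 1 by ring] at *
  have hθ : (-1) ^ n * ξ = ξ ∨ (-1) ^ n * ξ = -ξ :=
    (neg_one_pow_eq_or ℝ n).imp (fun hs => by rw [hs, one_mul]) fun hs => by rw [hs, neg_one_mul]
  obtain ⟨y, hy, hy0, hy1, hpts, hpts', hgaps⟩ := exists_three_gap_of_int hθ hdec hpp1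
    (h.q_pred_nonneg hξ n) hw0 hwq (h.etaCF_pos hξ n) (h.etaCF_pred_sub_mul_pos hξ hppa)
    (h.etaCF_ne_pred_sub_mul hξ n pp) (h.q_mul_etaCF_pred_add n)
    (exists_int_q_mul_neg_one_pow n).1 (exists_int_q_mul_neg_one_pow n).2
  exact ⟨y, fun i j _ _ hij => hy hij, hy0, hy1, hpts, hpts', hgaps⟩

/-- three distance theorem: the points 0, {ξ}, …, {Qξ} divide [0,1]
into Q+1 subintervals; with Q = pp·q_{k−1} + q_{k−2} + w (1 ≤ pp ≤ a_k,
0 ≤ w < q_{k−1}), exactly Q+1−q_{k−1} of them have length η_{k−1}, exactly w+1 have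
length η_{k−2} − pp·η_{k−1}, and exactly q_{k−1}−(w+1) have length
η_{k−2} − (pp−1)·η_{k−1}. Here y enumerates the points 0 = y₀ < y₁ < … < y_Q and
y_{Q+1} = 1, so the subintervals are [y_i, y_{i+1}], 0 ≤ i ≤ Q. -/
theorem three_distance_theorem
    (ξ : ℝ) (hξ : Irrational ξ) (x : ℕ → ℝ) (a p q : ℤ → ℤ)
    (hx0 : x 0 = ξ)
    (hxr : ∀ n : ℕ, x (n + 1) = 1 / (x n - ⌊x n⌋))
    (ha : ∀ n : ℕ, a (n : ℤ) = ⌊x n⌋)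
    (hpm1 : p (-1) = 1) (hqm1 : q (-1) = 0) (hp0 : p 0 = a 0) (hq0 : q 0 = 1)
    (hpr : ∀ k : ℤ, 1 ≤ k → p k = a k * p (k - 1) + p (k - 2))
    (hqr : ∀ k : ℤ, 1 ≤ k → q k = a k * q (k - 1) + q (k - 2))
    (Q : ℕ) (hQ : 1 ≤ Q) (k pp w : ℤ) (hk : 1 ≤ k)
    (hdec : (Q : ℤ) = pp * q (k - 1) + q (k - 2) + w)
    (hpp1 : 1 ≤ pp) (hppa : pp ≤ a k) (hw0 : 0 ≤ w) (hwq : w < q (k - 1)) :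
    ∃ y : ℕ → ℝ,
      (∀ i j : ℕ, i ≤ Q + 1 → j ≤ Q + 1 → i < j → y i < y j) ∧
      y 0 = 0 ∧ y (Q + 1) = 1 ∧
      (∀ i ≤ Q, ∃ j ≤ Q, y i = Int.fract ((j : ℝ) * ξ)) ∧
      (∀ j ≤ Q, ∃ i ≤ Q, Int.fract ((j : ℝ) * ξ) = y i) ∧
      (((Finset.range (Q + 1)).filter
          (fun i => y (i + 1) - y i = etaCF ξ p q (k - 1))).card : ℤ)
        = (Q : ℤ) + 1 - q (k - 1) ∧
      (((Finset.range (Q + 1)).filter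
          (fun i => y (i + 1) - y i =
            etaCF ξ p q (k - 2) - (pp : ℝ) * etaCF ξ p q (k - 1))).card : ℤ)
        = w + 1 ∧
      (((Finset.range (Q + 1)).filter
          (fun i => y (i + 1) - y i =
            etaCF ξ p q (k - 2) - ((pp : ℝ) - 1) * etaCF ξ p q (k - 1))).card : ℤ)
        = q (k - 1) - (w + 1) :=
  three_distance_theorem_general ξ hξ x a p q hx0 hxr ha hpm1 hqm1 hp0 hq0 hpr hqr Q k pp w hk hdec
    hpp1 hppa hw0 hwq
end

section
/- For any α, β ∈ ℤ/bℤ there exist i₁, i₂ ∈ ℤ/bℤ such that setting u_{−1} = α, u₀ = β, u₁ = i₁u₀ + u_{−1}, u₂ = i₂u₁ + u₀, one has u₂ = 0 in ℤ/bℤ. -/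
/-!
Write `β = u d` and `α = w e` with `u, w` units and `d, e ∣ b`, and put `d = d₀ g`, `e = e₀ g`
with `g = gcd d e`. Since `e₀` is a unit mod `d₀`, it lifts to a unit `e₀ + t d₀` mod `b`; then
`α + (t w u⁻¹) β = w (e₀ + t d₀) g` is associated to `g`, which divides `β`.
-/

namespace ZMod

theorem exists_isUnit_natCast_add_mul {b d e : ℕ} [NeZero b] (hd : d ∣ b) (he : e.Coprime d) :
    ∃ t : ZMod b, IsUnit ((e : ZMod b) + t * d) := by
  obtain ⟨u, hu⟩ := unitsMap_surjective hd (unitOfCoprime e he)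
  have hmod : e ≡ (u : ZMod b).val [MOD d] := by
    rw [← natCast_eq_natCast_iff, natCast_val, ← unitsMap_val hd, hu, coe_unitOfCoprime]
  obtain ⟨k, hk⟩ := Nat.modEq_iff_dvd.mp hmod
  refine ⟨k, ?_⟩
  have hu_eq : (u : ZMod b) = e + k * d := by
    rw [← natCast_zmod_val (u : ZMod b), ← Int.cast_natCast, sub_eq_iff_eq_add.mp hk]
    push_cast
    ring
  exact hu_eq ▸ u.isUnit

theorem exists_mul_add_dvd {b : ℕ} [NeZero b] (α β : ZMod b) : ∃ t : ZMod b, t * β + α ∣ β := by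
  obtain ⟨d, hd, u, hu, rfl⟩ := β.eq_unit_mul_divisor
  obtain ⟨e, -, w, hw, rfl⟩ := α.eq_unit_mul_divisor
  obtain ⟨u, rfl⟩ := hu
  obtain ⟨d₀, e₀, hco, hd₀, he₀⟩ := Nat.exists_coprime d e
  generalize d.gcd e = g at hd₀ he₀
  subst hd₀ he₀
  obtain ⟨t, hv⟩ := exists_isUnit_natCast_add_mul (dvd_of_mul_right_dvd hd) hco.symm
  refine ⟨t * w * u⁻¹, ?_⟩
  have hsum : t * w * ↑u⁻¹ * (u * (d₀ * g : ℕ)) + w * (e₀ * g : ℕ) = w * (e₀ + t * d₀) * g := by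
    push_cast
    linear_combination (t * w * d₀ * g) * u.inv_mul
  rw [hsum, (hw.mul hv).mul_left_dvd, Nat.cast_mul]
  exact Dvd.intro_left (u * d₀ : ZMod b) (mul_assoc _ _ _)

end ZMod

/-- For any α, β ∈ ℤ/bℤ there exist i₁, i₂ ∈ ℤ/bℤ with
u₋₁ = α, u₀ = β, u₁ = i₁u₀ + u₋₁, u₂ = i₂u₁ + u₀ and u₂ = 0. -/
theorem zmod_two_step_recurrence_kill
    (b : ℕ) (hb : 1 ≤ b) (α β : ZMod b) :
    ∃ i₁ i₂ : ZMod b, i₂ * (i₁ * β + α) + β = 0 := by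
  have : NeZero b := ⟨by omega⟩
  obtain ⟨i₁, c, hc⟩ := ZMod.exists_mul_add_dvd α β
  exact ⟨i₁, -c, by linear_combination hc⟩
end

section
/- Let ξ be an irrational which is not a rational multiple of π, and let α ∈ ℝ. Then liminf_{n→∞} (sin(nξ + α))^n = −1 and limsup_{n→∞} (sin(nξ + α))^n = 1, and the same statements hold with cos in place of sin. -/
/-!
Write `θ = ξ / π`. A good rational approximation `|θ - p/d| < 1/d²` in lowest terms makes
`m θ` (`1 ≤ m ≤ d`) hit every residue class `j/d` modulo `1` up to an error `1/d`, so for every `γ`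
there are arbitrarily large `m` with `m ‖m θ - γ‖² = O(1/d) → 0`. Taking `γ` so that
`2mξ + α ≡ π/2` (resp. `(2m+1)ξ + α ≡ -π/2`) modulo `2π`, the sine equals `±cos x` with
`n x² → 0`, and `cos x ^ n ≥ 1 - n x²/2` pushes the even (resp. odd) powers to `1` (resp. `-1`).
-/

open Filter Real

theorem Irrational.exists_rat_abs_sub_lt_one_div_den_sq_and_lt_den {θ : ℝ} (hθ : Irrational θ)
    (N : ℕ) : ∃ q : ℚ, |θ - q| < 1 / (q.den : ℝ) ^ 2 ∧ N < q.den := by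
  obtain ⟨ε, hε, hfar⟩ := (hθ.eventually_forall_le_dist_cast_rat_of_den_le N).exists_gt
  obtain ⟨q₀, hq₀, hq₀θ⟩ := exists_rat_btwn (sub_lt_self θ hε)
  obtain ⟨q, hq, hqq₀⟩ := exists_rat_abs_sub_lt_and_lt_of_irrational hθ q₀
  refine ⟨q, hq, not_le.mp fun hden => ?_⟩
  have := hfar q hden
  rw [Real.dist_eq, abs_of_pos (sub_pos.mpr hq₀θ)] at *
  linarith

theorem Rat.exists_pos_le_den_mul_num_modEq (q : ℚ) (j : ℤ) :
    ∃ n : ℕ, 0 < n ∧ n ≤ q.den ∧ n * q.num ≡ j [ZMOD q.den] := by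
  obtain ⟨a, b, hab⟩ := q.isCoprime_num_den
  have hd : (0 : ℤ) < q.den := by exact_mod_cast q.pos
  set r := (j * a - 1) % q.den + 1
  have hr₀ : 0 < r := by have := Int.emod_nonneg (j * a - 1) hd.ne'; omega
  have hrd : r ≤ q.den := by have := Int.emod_lt_of_pos (j * a - 1) hd; omega
  refine ⟨r.toNat, by omega, by omega, ?_⟩
  rw [Int.toNat_of_nonneg hr₀.le]
  calc r * q.num ≡ (j * a - 1 + 1) * q.num [ZMOD q.den] :=
        ((Int.mod_modEq _ _).add_right 1).mul_right _
    _ = j + q.den * (-(j * b)) := by linear_combination j * hab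
    _ ≡ j [ZMOD q.den] := by simp [Int.ModEq]

/-- Since `n ↦ n * q` permutes the residues modulo `1 / q.den`, every `γ` is within
`1 / (2 * q.den)` of some `n * q` modulo `1`; replacing `q` by `θ` costs at most
`n / q.den ^ 2 ≤ 1 / q.den`. -/
theorem exists_pos_le_den_abs_mul_sub_sub_int_le (θ γ : ℝ) (q : ℚ)
    (hq : |θ - q| < 1 / (q.den : ℝ) ^ 2) :
    ∃ n : ℕ, 0 < n ∧ n ≤ q.den ∧ ∃ k : ℤ, |n * θ - γ - k| ≤ 3 / (2 * q.den) := by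
  have hd : (0 : ℝ) < q.den := by exact_mod_cast q.pos
  set j := round ((q.den : ℝ) * γ)
  obtain ⟨n, hn₀, hnd, hmod⟩ := q.exists_pos_le_den_mul_num_modEq j
  obtain ⟨k, hk⟩ := hmod.dvd
  refine ⟨n, hn₀, hnd, -k, ?_⟩
  have hkR : (n : ℝ) * q.num = j - q.den * k := by
    exact_mod_cast (by linarith : n * q.num = j - q.den * k)
  have hsplit : (n : ℝ) * θ - γ - ((-k : ℤ) : ℝ) = n * (θ - q) - (q.den * γ - j) / q.den := by
    rw [Rat.cast_def]; push_cast; field_simp; linear_combination hkR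
  have happrox : |(n : ℝ) * (θ - q)| ≤ 1 / q.den := by
    rw [abs_mul, Nat.abs_cast]
    calc (n : ℝ) * |θ - q| ≤ q.den * (1 / (q.den : ℝ) ^ 2) :=
          mul_le_mul (by exact_mod_cast hnd) hq.le (abs_nonneg _) hd.le
      _ = 1 / q.den := by field_simp
  have hround : |(q.den * γ - j) / q.den| ≤ 1 / (2 * q.den) := by
    rw [abs_div, Nat.abs_cast, div_le_div_iff₀ hd (by positivity)]
    nlinarith [abs_sub_round ((q.den : ℝ) * γ)]
  calc |(n : ℝ) * θ - γ - ((-k : ℤ) : ℝ)| ≤ 1 / q.den + 1 / (2 * q.den) := by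
        rw [hsplit]; exact (abs_sub _ _).trans (add_le_add happrox hround)
    _ = 3 / (2 * q.den) := by field_simp; ring

theorem Irrational.frequently_exists_int_mul_sq_le {θ : ℝ} (hθ : Irrational θ) (γ : ℝ) {ε : ℝ}
    (hε : 0 < ε) : ∃ᶠ n : ℕ in atTop, ∃ k : ℤ, n * (n * θ - γ - k) ^ 2 ≤ ε := by
  rw [frequently_atTop]
  intro M
  obtain ⟨q, hq, hqden⟩ :=
    hθ.exists_rat_abs_sub_lt_one_div_den_sq_and_lt_den (max M ⌈9 / (2 * ε)⌉₊)
  obtain ⟨n, -, hnd, k, hk⟩ := exists_pos_le_den_abs_mul_sub_sub_int_le θ (γ - M * θ) q hq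
  refine ⟨M + n, le_add_right le_rfl, k, ?_⟩
  have hd : (0 : ℝ) < q.den := by exact_mod_cast q.pos
  have hMn : ((M + n : ℕ) : ℝ) ≤ 2 * q.den := by
    have : M + n ≤ 2 * q.den := by omega
    exact_mod_cast this
  have hεd : 9 / (2 * ε) ≤ q.den :=
    (Nat.le_ceil _).trans (by exact_mod_cast (le_max_right _ _).trans hqden.le)
  have hsq : ((M + n : ℕ) * θ - γ - k) ^ 2 ≤ (3 / (2 * q.den)) ^ 2 := by
    have hshift : ((M + n : ℕ) : ℝ) * θ - γ - k = n * θ - (γ - M * θ) - k := by push_cast; ring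
    rw [hshift, ← sq_abs]
    exact pow_le_pow_left₀ (abs_nonneg _) hk 2
  calc ((M + n : ℕ) : ℝ) * ((M + n : ℕ) * θ - γ - k) ^ 2
      ≤ 2 * q.den * (3 / (2 * q.den)) ^ 2 := mul_le_mul hMn hsq (sq_nonneg _) (by positivity)
    _ = 9 / (2 * q.den) := by field_simp; norm_num
    _ ≤ ε := by
      rw [div_le_iff₀ (by positivity)]
      rw [div_le_iff₀ (by positivity)] at hεd
      linarith

theorem one_sub_mul_sq_div_two_le_cos_pow {x : ℝ} (hx : x ^ 2 ≤ 2) (n : ℕ) :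
    1 - n * (x ^ 2 / 2) ≤ cos x ^ n :=
  calc 1 - n * (x ^ 2 / 2) = 1 + n * -(x ^ 2 / 2) := by ring
    _ ≤ (1 + -(x ^ 2 / 2)) ^ n := one_add_mul_le_pow (by linarith) n
    _ ≤ cos x ^ n :=
      pow_le_pow_left₀ (by linarith) (by linarith [one_sub_sq_div_two_le_cos (x := x)]) n

theorem frequently_one_sub_le_cos_two_mul_sub_pow {ξ : ℝ} (hξπ : Irrational (ξ / π)) (β : ℝ)
    (j : ℕ) {ε : ℝ} (hε : 0 < ε) :
    ∃ᶠ m : ℕ in atTop, 1 - ε ≤ cos (2 * m * ξ - β) ^ (2 * m + j) := by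
  set δ := min (ε / (j + 1)) 2
  have hδ : 0 < δ := lt_min (by positivity) two_pos
  refine ((hξπ.frequently_exists_int_mul_sq_le (β / (2 * π)) (ε := δ / (4 * π ^ 2))
    (by positivity)).and_eventually (eventually_gt_atTop 0)).mono ?_
  rintro m ⟨⟨k, hk⟩, hm⟩
  set x := 2 * π * (m * (ξ / π) - β / (2 * π) - k)
  have hcos : cos (2 * m * ξ - β) = cos x := by
    rw [← cos_add_int_mul_two_pi x k]; congr 1; simp only [x]; field_simp; ring
  have hmx : m * x ^ 2 ≤ δ := by
    have : m * x ^ 2 = 4 * π ^ 2 * (m * (m * (ξ / π) - β / (2 * π) - k) ^ 2) := by ring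
    rw [this, ← le_div_iff₀' (by positivity)]
    exact hk
  have hm₁ : (1 : ℝ) ≤ m := by exact_mod_cast hm
  have hx₂ : x ^ 2 ≤ 2 := by nlinarith [min_le_right (ε / (j + 1)) 2, sq_nonneg x]
  have hjx : (j : ℝ) * x ^ 2 ≤ j * (m * x ^ 2) := by
    nlinarith [mul_nonneg (Nat.cast_nonneg j) (sq_nonneg x)]
  have hδε : δ * (j + 1) ≤ ε := (le_div_iff₀ (by positivity)).mp (min_le_left _ _)
  rw [hcos]
  refine le_trans ?_ (one_sub_mul_sq_div_two_le_cos_pow hx₂ _)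
  push_cast
  nlinarith [mul_le_mul_of_nonneg_left hmx (by positivity : (0 : ℝ) ≤ j + 1)]

theorem frequently_one_sub_le_sin_pow {ξ : ℝ} (hξπ : Irrational (ξ / π)) (α : ℝ) {ε : ℝ}
    (hε : 0 < ε) : ∃ᶠ n : ℕ in atTop, 1 - ε ≤ sin (n * ξ + α) ^ n := by
  refine (tendsto_atTop_mono (fun m => by dsimp; omega) tendsto_id).frequently_map
    (fun m => 2 * m) (fun m hm => ?_)
    (frequently_one_sub_le_cos_two_mul_sub_pow hξπ (π / 2 - α) 0 hε)
  rwa [← cos_sub_pi_div_two, Nat.cast_mul, Nat.cast_ofNat, show 2 * m * ξ + α - π / 2 =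
    2 * m * ξ - (π / 2 - α) by ring]

theorem frequently_sin_pow_le_neg_one_add {ξ : ℝ} (hξπ : Irrational (ξ / π)) (α : ℝ) {ε : ℝ}
    (hε : 0 < ε) : ∃ᶠ n : ℕ in atTop, sin (n * ξ + α) ^ n ≤ -1 + ε := by
  refine (tendsto_atTop_mono (fun m => by dsimp; omega) tendsto_id).frequently_map
    (fun m => 2 * m + 1) (fun m hm => ?_)
    (frequently_one_sub_le_cos_two_mul_sub_pow hξπ (-ξ - α - π / 2) 1 hε)
  have hsin : sin (((2 * m + 1 : ℕ) : ℝ) * ξ + α) = -cos (2 * m * ξ - (-ξ - α - π / 2)) := by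
    rw [← neg_eq_iff_eq_neg, ← cos_add_pi_div_two]; push_cast; ring_nf
  rw [hsin, Odd.neg_pow ⟨m, rfl⟩]
  linarith

theorem abs_sin_pow_le_one (x : ℝ) (n : ℕ) : |sin x ^ n| ≤ 1 := by
  rw [abs_pow]; exact pow_le_one₀ (abs_nonneg _) (abs_sin_le_one x)

theorem limsup_sin_pow {ξ : ℝ} (hξπ : Irrational (ξ / π)) (α : ℝ) :
    limsup (fun n : ℕ => sin (n * ξ + α) ^ n) atTop = 1 := by
  have hle : ∀ n : ℕ, sin (n * ξ + α) ^ n ≤ 1 := fun n => (abs_le.mp (abs_sin_pow_le_one _ n)).2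
  have hge : ∀ n : ℕ, -1 ≤ sin (n * ξ + α) ^ n := fun n => (abs_le.mp (abs_sin_pow_le_one _ n)).1
  refine le_antisymm (limsup_le_of_le (isBoundedUnder_of ⟨-1, hge⟩).isCoboundedUnder_le
    (.of_forall hle)) (le_of_forall_pos_le_add fun ε hε => ?_)
  have := le_limsup_of_frequently_le (frequently_one_sub_le_sin_pow hξπ α hε)
    (isBoundedUnder_of ⟨1, hle⟩)
  linarith

theorem liminf_sin_pow {ξ : ℝ} (hξπ : Irrational (ξ / π)) (α : ℝ) :
    liminf (fun n : ℕ => sin (n * ξ + α) ^ n) atTop = -1 := by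
  have hle : ∀ n : ℕ, sin (n * ξ + α) ^ n ≤ 1 := fun n => (abs_le.mp (abs_sin_pow_le_one _ n)).2
  have hge : ∀ n : ℕ, -1 ≤ sin (n * ξ + α) ^ n := fun n => (abs_le.mp (abs_sin_pow_le_one _ n)).1
  refine le_antisymm (le_of_forall_pos_le_add fun ε hε => ?_)
    (le_liminf_of_le (isBoundedUnder_of ⟨1, hle⟩).isCoboundedUnder_ge (.of_forall hge))
  exact liminf_le_of_frequently_le (frequently_sin_pow_le_neg_one_add hξπ α hε)
    (isBoundedUnder_of ⟨-1, hge⟩)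

theorem liminf_limsup_sin_cos_pow_general
    (ξ α : ℝ) (hξπ : Irrational (ξ / Real.pi)) :
    liminf (fun n : ℕ => (Real.sin (n * ξ + α)) ^ n) atTop = -1 ∧
    liminf (fun n : ℕ => (Real.cos (n * ξ + α)) ^ n) atTop = -1 ∧
    limsup (fun n : ℕ => (Real.sin (n * ξ + α)) ^ n) atTop = 1 ∧
    limsup (fun n : ℕ => (Real.cos (n * ξ + α)) ^ n) atTop = 1 := by
  have hcos : ∀ n : ℕ, cos (n * ξ + α) = sin (n * ξ + (α + π / 2)) := fun n => by
    rw [← add_assoc, sin_add_pi_div_two]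
  simp only [hcos]
  exact ⟨liminf_sin_pow hξπ α, liminf_sin_pow hξπ _, limsup_sin_pow hξπ α, limsup_sin_pow hξπ _⟩

/-- If ξ is irrational and not a rational multiple of π, then for any α,
liminf (sin(nξ+α))ⁿ = −1, limsup (sin(nξ+α))ⁿ = 1, and similarly for cos. -/
theorem liminf_limsup_sin_cos_pow
    (ξ α : ℝ) (hξ : Irrational ξ) (hξπ : Irrational (ξ / Real.pi)) :
    liminf (fun n : ℕ => (Real.sin (n * ξ + α)) ^ n) atTop = -1 ∧
    liminf (fun n : ℕ => (Real.cos (n * ξ + α)) ^ n) atTop = -1 ∧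
    limsup (fun n : ℕ => (Real.sin (n * ξ + α)) ^ n) atTop = 1 ∧
    limsup (fun n : ℕ => (Real.cos (n * ξ + α)) ^ n) atTop = 1 :=
  liminf_limsup_sin_cos_pow_general ξ α hξπ
end
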